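/- arXiv:2102.07141 — 3 statements merged into one kernel-verified Lean document; each statement's English description precedes it below -/
import Mathlib

section
/- Let h ∈ K, and let u be a C² function on the closure of A satisfying −Δu + u = h pointwise in A and u = 0 on ∂A (here Δu denotes the sum of the second partial derivatives of u). Then u ∈ K. -/
open MeasureTheory Real Set

noncomputable section

/-- The open annulus `{x : R₀ < |x| < R₁}` in `ℝ^N`. -/
def annulus (N : ℕ) (R₀ R₁ : ℝ) : Set (EuclideanSpace ℝ (Fin N)) :=
  {x | R₀ < ‖x‖ ∧ ‖x‖ < R₁}

/-- The last coordinate `x_N` of a point of `ℝ^N`. -/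
def lastCoord {N : ℕ} (x : EuclideanSpace ℝ (Fin N)) : ℝ :=
  if h : 0 < N then x ⟨N - 1, by omega⟩ else 0

/-- The polar angle `θ = arcsin (x_N / |x|)`. -/
def angleOf {N : ℕ} (x : EuclideanSpace ℝ (Fin N)) : ℝ :=
  Real.arcsin (lastCoord x / ‖x‖)

/-- `u` is axially symmetric on the closed annulus with representative `𝔲 = 𝔲(r,θ)`. -/
def IsAxiallySymmRep (N : ℕ) (R₀ R₁ : ℝ) (u : EuclideanSpace ℝ (Fin N) → ℝ)
    (𝔲 : ℝ → ℝ → ℝ) : Prop :=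
  ∀ x ∈ closure (annulus N R₀ R₁), u x = 𝔲 ‖x‖ (angleOf x)

/-- Membership in the cone `K̂`: `C¹` on the closed annulus, nonnegative, axially symmetric,
even in `θ` and nonincreasing in `θ` on `[0, π/2]`. -/
def memKhat (N : ℕ) (R₀ R₁ : ℝ) (u : EuclideanSpace ℝ (Fin N) → ℝ) : Prop :=
  ContDiffOn ℝ 1 u (closure (annulus N R₀ R₁)) ∧
  (∀ x ∈ closure (annulus N R₀ R₁), 0 ≤ u x) ∧
  ∃ 𝔲 : ℝ → ℝ → ℝ,
    IsAxiallySymmRep N R₀ R₁ u 𝔲 ∧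
    (∀ r ∈ Icc R₀ R₁, ∀ θ ∈ Icc (-(π / 2)) (π / 2), 𝔲 r (-θ) = 𝔲 r θ) ∧
    (∀ r ∈ Icc R₀ R₁, AntitoneOn (𝔲 r) (Icc 0 (π / 2)))

/-- `C¹₀(A)` : `C¹` on the closed annulus, vanishing on the boundary. -/
def memC10 (N : ℕ) (R₀ R₁ : ℝ) (u : EuclideanSpace ℝ (Fin N) → ℝ) : Prop :=
  ContDiffOn ℝ 1 u (closure (annulus N R₀ R₁)) ∧
  ∀ x : EuclideanSpace ℝ (Fin N), (‖x‖ = R₀ ∨ ‖x‖ = R₁) → u x = 0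

/-- The cone `K = K̂ ∩ C¹₀(A)`. -/
def memK (N : ℕ) (R₀ R₁ : ℝ) (u : EuclideanSpace ℝ (Fin N) → ℝ) : Prop :=
  memKhat N R₀ R₁ u ∧ ∀ x : EuclideanSpace ℝ (Fin N), (‖x‖ = R₀ ∨ ‖x‖ = R₁) → u x = 0

/-- The squared `H¹(A)`-norm `∫_A (|∇u|² + u²) dx`. -/
def H1sq (N : ℕ) (R₀ R₁ : ℝ) (u : EuclideanSpace ℝ (Fin N) → ℝ) : ℝ :=
  ∫ x in annulus N R₀ R₁,
    (‖fderivWithin ℝ u (closure (annulus N R₀ R₁)) x‖ ^ 2 + (u x) ^ 2)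

/-- The energy functional `I(u) = ½‖u‖²_{H¹} − (1/p) ∫_A a |u|^p`. -/
def funcI (N : ℕ) (R₀ R₁ : ℝ) (a : EuclideanSpace ℝ (Fin N) → ℝ) (p : ℝ)
    (u : EuclideanSpace ℝ (Fin N) → ℝ) : ℝ :=
  (1 / 2) * H1sq N R₀ R₁ u - (1 / p) * ∫ x in annulus N R₀ R₁, a x * |u x| ^ p

/-- The Nehari set `N_K`. -/
def memNehari (N : ℕ) (R₀ R₁ : ℝ) (a : EuclideanSpace ℝ (Fin N) → ℝ) (p : ℝ)
    (u : EuclideanSpace ℝ (Fin N) → ℝ) : Prop :=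
  memK N R₀ R₁ u ∧ (∃ x ∈ annulus N R₀ R₁, u x ≠ 0) ∧
  H1sq N R₀ R₁ u = ∫ x in annulus N R₀ R₁, a x * |u x| ^ p

/-- The Nehari level `c_I = inf_{N_K} I`. -/
def cI (N : ℕ) (R₀ R₁ : ℝ) (a : EuclideanSpace ℝ (Fin N) → ℝ) (p : ℝ) : ℝ :=
  sInf {c | ∃ u, memNehari N R₀ R₁ a p u ∧ c = funcI N R₀ R₁ a p u}

/-- Test functions `C_c^∞(A)`. -/
def IsTestFun (N : ℕ) (R₀ R₁ : ℝ) (φ : EuclideanSpace ℝ (Fin N) → ℝ) : Prop :=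
  ContDiff ℝ (⊤ : ℕ∞) φ ∧ HasCompactSupport φ ∧ tsupport φ ⊆ annulus N R₀ R₁

/-- Weak solution of `−Δu + u = a(x)|u|^{p−2}u` in `A`, `u = 0` on `∂A`. -/
def IsWeakSolution (N : ℕ) (R₀ R₁ : ℝ) (a : EuclideanSpace ℝ (Fin N) → ℝ) (p : ℝ)
    (u : EuclideanSpace ℝ (Fin N) → ℝ) : Prop :=
  memC10 N R₀ R₁ u ∧
  ∀ φ : EuclideanSpace ℝ (Fin N) → ℝ, IsTestFun N R₀ R₁ φ →
    (∫ x in annulus N R₀ R₁,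
      (fderivWithin ℝ u (closure (annulus N R₀ R₁)) x (gradient φ x) + u x * φ x))
    = ∫ x in annulus N R₀ R₁, a x * |u x| ^ (p - 2) * u x * φ x

/-- The (classical) Laplacian, as the sum of second partial derivatives. -/
def lapl {N : ℕ} (u : EuclideanSpace ℝ (Fin N) → ℝ) (x : EuclideanSpace ℝ (Fin N)) : ℝ :=
  ∑ i : Fin N,
    fderiv ℝ (fun y => fderiv ℝ u y (EuclideanSpace.single i 1)) x (EuclideanSpace.single i 1)

/-- The inclusion `ℝ^{N-1} → ℝ^N`, `x' ↦ (x',0)`. -/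
def embedHyper (N : ℕ) (x' : EuclideanSpace ℝ (Fin (N - 1))) : EuclideanSpace ℝ (Fin N) :=
  (WithLp.equiv 2 (Fin N → ℝ)).symm
    (fun j => if h : (j : ℕ) < N - 1 then x' ⟨j, h⟩ else 0)

/-- A `C¹` distance on the closed annulus. -/
def C1dist (N : ℕ) (R₀ R₁ : ℝ) (u v : EuclideanSpace ℝ (Fin N) → ℝ) : ℝ :=
  (⨆ x : closure (annulus N R₀ R₁), |u x - v x|) +
  (⨆ x : closure (annulus N R₀ R₁),
    ‖fderivWithin ℝ u (closure (annulus N R₀ R₁)) x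
      - fderivWithin ℝ v (closure (annulus N R₀ R₁)) x‖)

end


/-! ### Auxiliary machinery -/

section AuxBilin
variable {E' : Type*} [NormedAddCommGroup E'] [InnerProductSpace ℝ E'] {ι : Type*} [Fintype ι]

private lemma aux_bilin_expand (b : OrthonormalBasis ι ℝ E') (B : E' →L[ℝ] E' →L[ℝ] ℝ) (x : E') :
    B x x = ∑ j, ∑ k, (inner ℝ (b j) x : ℝ) * (inner ℝ (b k) x : ℝ) * B (b j) (b k) := by
  conv_lhs => rw [← b.sum_repr x]
  simp only [map_sum, _root_.map_smul, ContinuousLinearMap.coe_sum', Finset.sum_apply,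
    ContinuousLinearMap.coe_smul', Pi.smul_apply, ContinuousLinearMap.sum_apply,
    ContinuousLinearMap.smul_apply, smul_eq_mul, OrthonormalBasis.repr_apply_apply,
    Finset.mul_sum]
  rw [Finset.sum_comm]
  exact Finset.sum_congr rfl fun j _ => Finset.sum_congr rfl fun k _ => by ring

private lemma aux_sum_bilin_diag_eq [DecidableEq ι] (b c : OrthonormalBasis ι ℝ E')
    (B : E' →L[ℝ] E' →L[ℝ] ℝ) :
    ∑ i, B (c i) (c i) = ∑ i, B (b i) (b i) := by
  have h2 : ∑ i, B (c i) (c i)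
      = ∑ j, ∑ k, (∑ i, (inner ℝ (b j) (c i) : ℝ) * (inner ℝ (b k) (c i) : ℝ)) * B (b j) (b k) := by
    simp only [fun i => aux_bilin_expand b B (c i), Finset.sum_mul]
    rw [Finset.sum_comm]
    refine Finset.sum_congr rfl fun j _ => ?_
    rw [Finset.sum_comm]
  have h3 : ∀ j k, (∑ i, (inner ℝ (b j) (c i) : ℝ) * (inner ℝ (b k) (c i) : ℝ))
      = (inner ℝ (b j) (b k) : ℝ) := by
    intro j k
    have := c.sum_inner_mul_inner (b j) (b k)
    simpa [real_inner_comm] using this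
  have h4 : ∀ j k, (inner ℝ (b j) (b k) : ℝ) = if j = k then 1 else 0 := by
    intro j k
    have hb := b.orthonormal
    rw [orthonormal_iff_ite] at hb
    exact hb j k
  rw [h2]
  simp only [h3, h4, ite_mul, one_mul, zero_mul]
  rw [Finset.sum_comm]
  simp [Finset.sum_ite_eq]

private lemma aux_second_deriv_nonneg_of_localMin {f : E' → ℝ} {x : E'}
    (hf : ContDiffAt ℝ 2 f x) (hmin : IsLocalMin f x) (v : E') :
    0 ≤ fderiv ℝ (fderiv ℝ f) x v v := by
  by_contra hc
  push_neg at hc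
  set G := fderiv ℝ (fderiv ℝ f) x with hG
  set L : ℝ → E' := fun t => x + t • v with hL
  set g : ℝ → ℝ := fun t => f (L t) with hg
  set g' : ℝ → ℝ := fun t => fderiv ℝ f (L t) v with hg'
  have hLd : ∀ t : ℝ, HasDerivAt L v t := by
    intro t
    simpa [hL] using ((hasDerivAt_id t).smul_const v).const_add x
  have hL0 : L 0 = x := by simp [hL]
  have hten : Filter.Tendsto L (nhds 0) (nhds x) := by
    rw [← hL0]; exact (by continuity : Continuous L).continuousAt
  have hev : ∀ᶠ t in nhds (0:ℝ), ContDiffAt ℝ 2 f (L t) :=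
    hten.eventually (hf.eventually (by norm_num : (2 : WithTop ℕ∞) ≠ (⊤ : ℕ∞)))
  have hgd : ∀ᶠ t in nhds (0:ℝ), HasDerivAt g (g' t) t := by
    filter_upwards [hev] with t ht
    exact ((ht.differentiableAt two_ne_zero).hasFDerivAt).comp_hasDerivAt t (hLd t)
  have hFd : HasFDerivAt (fderiv ℝ f) G x :=
    ((hf.fderiv_right (m := 1) one_add_one_eq_two.le).differentiableAt one_ne_zero).hasFDerivAt
  have hFdL : HasDerivAt (fun t => fderiv ℝ f (L t)) (G v) 0 := by
    have hFd' : HasFDerivAt (fderiv ℝ f) G (L 0) := by rw [hL0]; exact hFd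
    exact hFd'.comp_hasDerivAt 0 (hLd 0)
  have hg'd : HasDerivAt g' (G v v) 0 :=
    (ContinuousLinearMap.apply ℝ ℝ v).hasFDerivAt.comp_hasDerivAt 0 hFdL
  have hg'0 : g' 0 = 0 := by
    have h0 : fderiv ℝ f x = 0 := hmin.fderiv_eq_zero
    simp [hg', hL0, h0]
  have hgmin : ∀ᶠ t in nhds (0:ℝ), g 0 ≤ g t := by
    filter_upwards [hten.eventually hmin] with t ht
    simpa [hg, hL0] using ht
  have hslope : Filter.Tendsto (slope g' 0) (nhdsWithin 0 {(0:ℝ)}ᶜ) (nhds (G v v)) :=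
    hasDerivAt_iff_tendsto_slope.mp hg'd
  have hslneg : ∀ᶠ t in nhdsWithin 0 {(0:ℝ)}ᶜ, slope g' 0 t < 0 :=
    hslope.eventually_lt_const hc
  have hg'neg : ∀ᶠ t in nhds (0:ℝ), t ∈ Ioi (0:ℝ) → g' t < 0 := by
    have h1 : ∀ᶠ t in nhdsWithin 0 (Ioi (0:ℝ)), slope g' 0 t < 0 :=
      hslneg.filter_mono (nhdsWithin_mono _ (fun t ht => ne_of_gt ht))
    rw [eventually_nhdsWithin_iff] at h1
    filter_upwards [h1] with t ht htpos
    have h2 := ht htpos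
    rw [slope_def_field, hg'0, sub_zero, sub_zero] at h2
    rcases div_neg_iff.mp h2 with ⟨_, h3⟩ | ⟨h3, _⟩
    · exact absurd htpos (not_lt.mpr h3.le)
    · exact h3
  obtain ⟨ε, hε, hall⟩ := Metric.eventually_nhds_iff.mp (hgd.and (hgmin.and hg'neg))
  set t₀ : ℝ := ε / 2 with ht₀
  have ht₀pos : 0 < t₀ := by positivity
  have ht₀ε : ∀ t ∈ Icc (0:ℝ) t₀, dist t 0 < ε := by
    intro t ht
    rw [Real.dist_eq, sub_zero, abs_of_nonneg ht.1]
    have := ht.2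
    rw [ht₀] at this
    linarith
  have hanti : StrictAntiOn g (Icc 0 t₀) := by
    apply strictAntiOn_of_deriv_neg (convex_Icc 0 t₀)
    · intro t ht
      exact ((hall (ht₀ε t ht)).1.continuousAt).continuousWithinAt
    · intro t ht
      rw [interior_Icc] at ht
      have h := hall (ht₀ε t ⟨ht.1.le, ht.2.le⟩)
      rw [h.1.deriv]
      exact h.2.2 ht.1
  have h1 : g t₀ < g 0 := hanti (left_mem_Icc.mpr ht₀pos.le) (right_mem_Icc.mpr ht₀pos.le) ht₀pos
  have h2 : g 0 ≤ g t₀ := (hall (ht₀ε t₀ (right_mem_Icc.mpr ht₀pos.le))).2.1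
  linarith

end AuxBilin

section AuxLapl
variable {N : ℕ} {f g : EuclideanSpace ℝ (Fin N) → ℝ} {x : EuclideanSpace ℝ (Fin N)}

private lemma aux_fderiv_fderiv_apply (hf : ContDiffAt ℝ 2 f x)
    (v : EuclideanSpace ℝ (Fin N)) :
    fderiv ℝ (fun y => fderiv ℝ f y v) x
      = (ContinuousLinearMap.apply ℝ ℝ v).comp (fderiv ℝ (fderiv ℝ f) x) := by
  have hd : DifferentiableAt ℝ (fderiv ℝ f) x :=
    (hf.fderiv_right (m := 1) one_add_one_eq_two.le).differentiableAt one_ne_zero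
  have := ((ContinuousLinearMap.apply ℝ ℝ v).hasFDerivAt.comp x hd.hasFDerivAt).fderiv
  exact this

private lemma aux_lapl_eq (hf : ContDiffAt ℝ 2 f x) :
    lapl f x = ∑ i : Fin N, fderiv ℝ (fderiv ℝ f) x (EuclideanSpace.single i 1)
      (EuclideanSpace.single i 1) := by
  unfold lapl
  refine Finset.sum_congr rfl fun i _ => ?_
  rw [aux_fderiv_fderiv_apply hf]
  simp

private lemma aux_lapl_sub (hf : ContDiffAt ℝ 2 f x) (hg : ContDiffAt ℝ 2 g x) :
    lapl (fun y => f y - g y) x = lapl f x - lapl g x := by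
  have hev : ∀ᶠ y in nhds x, DifferentiableAt ℝ f y ∧ DifferentiableAt ℝ g y := by
    filter_upwards [hf.eventually (by norm_num), hg.eventually (by norm_num)] with y h1 h2
    exact ⟨h1.differentiableAt two_ne_zero, h2.differentiableAt two_ne_zero⟩
  have heq2 : (fun y => fderiv ℝ (fun z => f z - g z) y)
      =ᶠ[nhds x] fun y => fderiv ℝ f y - fderiv ℝ g y := by
    filter_upwards [hev] with y hy
    exact fderiv_sub hy.1 hy.2
  have hdf : DifferentiableAt ℝ (fderiv ℝ f) x :=
    (hf.fderiv_right (m := 1) one_add_one_eq_two.le).differentiableAt one_ne_zero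
  have hdg : DifferentiableAt ℝ (fderiv ℝ g) x :=
    (hg.fderiv_right (m := 1) one_add_one_eq_two.le).differentiableAt one_ne_zero
  have h2 : fderiv ℝ (fderiv ℝ (fun z => f z - g z)) x
      = fderiv ℝ (fderiv ℝ f) x - fderiv ℝ (fderiv ℝ g) x := by
    rw [heq2.fderiv_eq, fderiv_fun_sub hdf hdg]
  rw [aux_lapl_eq (hf.sub hg), aux_lapl_eq hf, aux_lapl_eq hg, ← Finset.sum_sub_distrib]
  refine Finset.sum_congr rfl fun i _ => ?_
  rw [h2]
  simp

private lemma aux_lapl_comp (R : EuclideanSpace ℝ (Fin N) ≃ₗᵢ[ℝ] EuclideanSpace ℝ (Fin N))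
    (hf : ContDiffAt ℝ 2 f (R x)) : lapl (fun y => f (R y)) x = lapl f (R x) := by
  classical
  set F := fderiv ℝ f with hF
  set G := fderiv ℝ F (R x) with hG
  set Rclm : EuclideanSpace ℝ (Fin N) →L[ℝ] EuclideanSpace ℝ (Fin N) :=
    (R.toContinuousLinearEquiv : EuclideanSpace ℝ (Fin N) →L[ℝ] EuclideanSpace ℝ (Fin N)) with hR
  have hRcoe : ∀ z, Rclm z = R z := fun z => rfl
  have hRF : ∀ y, HasFDerivAt (⇑R) Rclm y := fun y => by
    exact Rclm.hasFDerivAt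
  have hev : ∀ᶠ y in nhds x, ContDiffAt ℝ 2 f (R y) :=
    (R.continuous.continuousAt).eventually (hf.eventually (by norm_num))
  have key1 : ∀ᶠ y in nhds x, fderiv ℝ (fun z => f (R z)) y = (F (R y)).comp Rclm := by
    filter_upwards [hev] with y hy
    exact ((hy.differentiableAt two_ne_zero).hasFDerivAt.comp y (hRF y)).fderiv
  have hFd : HasFDerivAt F G (R x) :=
    ((hf.fderiv_right (m := 1) one_add_one_eq_two.le).differentiableAt one_ne_zero).hasFDerivAt
  have hcomp : HasFDerivAt (fun y => F (R y)) (G.comp Rclm) x := hFd.comp x (hRF x)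
  have main : ∀ v w : EuclideanSpace ℝ (Fin N),
      fderiv ℝ (fun y => fderiv ℝ (fun z => f (R z)) y v) x w = G (R w) (R v) := by
    intro v w
    have e1 : (fun y => fderiv ℝ (fun z => f (R z)) y v) =ᶠ[nhds x]
        (fun y => F (R y) (Rclm v)) := by
      filter_upwards [key1] with y hy
      rw [hy]; rfl
    have h2 : HasFDerivAt (fun y => F (R y) (Rclm v))
        ((ContinuousLinearMap.apply ℝ ℝ (Rclm v)).comp (G.comp Rclm)) x :=
      (ContinuousLinearMap.apply ℝ ℝ (Rclm v)).hasFDerivAt.comp x hcomp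
    rw [e1.fderiv_eq, h2.fderiv]
    simp [hRcoe]
  have hL : lapl (fun y => f (R y)) x
      = ∑ i : Fin N, G (R (EuclideanSpace.single i 1)) (R (EuclideanSpace.single i 1)) := by
    unfold lapl
    exact Finset.sum_congr rfl fun i _ => main _ _
  rw [hL, aux_lapl_eq hf]
  have hb : ∀ i, (EuclideanSpace.basisFun (Fin N) ℝ) i = EuclideanSpace.single i 1 := by
    intro i; simp [EuclideanSpace.basisFun_apply]
  have := aux_sum_bilin_diag_eq (EuclideanSpace.basisFun (Fin N) ℝ)
    ((EuclideanSpace.basisFun (Fin N) ℝ).map R) G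
  simp only [OrthonormalBasis.map_apply, hb] at this
  exact this

private lemma aux_lapl_nonneg_of_localMin (hf : ContDiffAt ℝ 2 f x) (hmin : IsLocalMin f x) :
    0 ≤ lapl f x := by
  rw [aux_lapl_eq hf]
  exact Finset.sum_nonneg fun i _ => aux_second_deriv_nonneg_of_localMin hf hmin _

/-- Weak minimum principle for `-Δ + 1` on a bounded open set. -/
private lemma aux_minPrinciple {Ω : Set (EuclideanSpace ℝ (Fin N))} (hΩo : IsOpen Ω)
    (hbdd : Bornology.IsBounded Ω) {w : EuclideanSpace ℝ (Fin N) → ℝ}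
    (hw2 : ∀ y ∈ Ω, ContDiffAt ℝ 2 w y)
    (hwc : ContinuousOn w (closure Ω))
    (heqw : ∀ y ∈ Ω, 0 ≤ -lapl w y + w y)
    (hbdw : ∀ y ∈ closure Ω \ Ω, 0 ≤ w y) :
    ∀ y ∈ closure Ω, 0 ≤ w y := by
  rcases (closure Ω).eq_empty_or_nonempty with he | hne
  · intro y hy; rw [he] at hy; exact absurd hy (notMem_empty y)
  have hK : IsCompact (closure Ω) :=
    Metric.isCompact_of_isClosed_isBounded isClosed_closure hbdd.closure
  obtain ⟨x₀, hx₀K, hx₀⟩ := hK.exists_isMinOn hne hwc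
  intro y hy
  have hmin : w x₀ ≤ w y := hx₀ hy
  rcases le_or_gt 0 (w x₀) with hcase | hcase
  · linarith
  have hx₀Ω : x₀ ∈ Ω := by
    by_contra hcon
    exact absurd (hbdw x₀ ⟨hx₀K, hcon⟩) (not_le.mpr hcase)
  have hloc : IsLocalMin w x₀ :=
    hx₀.isLocalMin (Filter.mem_of_superset (hΩo.mem_nhds hx₀Ω) subset_closure)
  have h1 : 0 ≤ lapl w x₀ := aux_lapl_nonneg_of_localMin (hw2 x₀ hx₀Ω) hloc
  have h2 := heqw x₀ hx₀Ω
  linarith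

end AuxLapl

section AuxGeom
variable {N : ℕ} {R₀ R₁ : ℝ}

private lemma aux_isOpen_annulus : IsOpen (annulus N R₀ R₁) :=
  (isOpen_lt continuous_const continuous_norm).inter (isOpen_lt continuous_norm continuous_const)

private lemma aux_isBounded_annulus : Bornology.IsBounded (annulus N R₀ R₁) := by
  apply (Metric.isBounded_closedBall (x := (0 : EuclideanSpace ℝ (Fin N))) (r := R₁)).subset
  intro x hx
  simpa [Metric.mem_closedBall] using hx.2.le

private lemma aux_closure_annulus (hR₀ : 0 < R₀) (hR : R₀ < R₁) :
    closure (annulus N R₀ R₁) = {x | R₀ ≤ ‖x‖ ∧ ‖x‖ ≤ R₁} := by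
  apply subset_antisymm
  · have : IsClosed {x : EuclideanSpace ℝ (Fin N) | R₀ ≤ ‖x‖ ∧ ‖x‖ ≤ R₁} :=
      (isClosed_le continuous_const continuous_norm).inter
        (isClosed_le continuous_norm continuous_const)
    exact closure_minimal (fun x hx => ⟨hx.1.le, hx.2.le⟩) this
  · intro x hx
    obtain ⟨h1, h2⟩ := hx
    have hxn : (0:ℝ) < ‖x‖ := lt_of_lt_of_le hR₀ h1
    set f : ℝ → EuclideanSpace ℝ (Fin N) := fun c => (c / ‖x‖) • x with hf
    have hfc : Continuous f := (continuous_id.div_const _).smul continuous_const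
    have hximg : x = f ‖x‖ := by
      simp [hf, div_self (ne_of_gt hxn)]
    have hmem : ‖x‖ ∈ closure (Ioo R₀ R₁) := by
      rw [closure_Ioo (ne_of_lt hR)]
      exact ⟨h1, h2⟩
    have hsub : f '' (Ioo R₀ R₁) ⊆ annulus N R₀ R₁ := by
      rintro - ⟨c, hc, rfl⟩
      have hc0 : 0 < c := lt_trans hR₀ hc.1
      have : ‖f c‖ = c := by
        rw [hf]
        simp only [norm_smul]
        rw [Real.norm_eq_abs, abs_div, abs_of_pos hc0, abs_of_pos hxn,
          div_mul_cancel₀ _ (ne_of_gt hxn)]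
      constructor <;> simp [this, hc.1, hc.2]
    have m1 : x ∈ f '' closure (Ioo R₀ R₁) := hximg ▸ mem_image_of_mem f hmem
    have m2 : x ∈ closure (f '' Ioo R₀ R₁) := image_closure_subset_closure_image hfc m1
    exact closure_mono hsub m2

private lemma aux_contDiffAt_of_annulus {u : EuclideanSpace ℝ (Fin N) → ℝ}
    (hu : ContDiffOn ℝ 2 u (closure (annulus N R₀ R₁))) {y : EuclideanSpace ℝ (Fin N)}
    (hy : y ∈ annulus N R₀ R₁) : ContDiffAt ℝ 2 u y :=
  (hu y (subset_closure hy)).contDiffAt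
    (mem_nhds_iff.mpr ⟨annulus N R₀ R₁, subset_closure, aux_isOpen_annulus, hy⟩)

/-- The comparison engine: weak minimum principle applied to `u - u ∘ R`. -/
private lemma aux_compare (hR₀ : 0 < R₀) (hR : R₀ < R₁)
    {u h : EuclideanSpace ℝ (Fin N) → ℝ}
    (hu : ContDiffOn ℝ 2 u (closure (annulus N R₀ R₁)))
    (hequ : ∀ x ∈ annulus N R₀ R₁, -lapl u x + u x = h x)
    (R : EuclideanSpace ℝ (Fin N) ≃ₗᵢ[ℝ] EuclideanSpace ℝ (Fin N))
    {Ω : Set (EuclideanSpace ℝ (Fin N))} (hΩo : IsOpen Ω) (hΩA : Ω ⊆ annulus N R₀ R₁)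
    (hh' : ∀ z ∈ Ω, h (R z) ≤ h z)
    (hbdry : ∀ z ∈ closure Ω \ Ω, u (R z) ≤ u z) :
    ∀ z ∈ closure Ω, u (R z) ≤ u z := by
  have hRc : ContDiff ℝ 2 ⇑R := R.contDiff
  have hmapsA : ∀ z ∈ annulus N R₀ R₁, R z ∈ annulus N R₀ R₁ := by
    intro z hz
    simpa [annulus, R.norm_map] using hz
  have hmapsC : ∀ z ∈ closure (annulus N R₀ R₁), R z ∈ closure (annulus N R₀ R₁) := by
    intro z hz
    rw [aux_closure_annulus hR₀ hR] at hz ⊢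
    simpa [R.norm_map] using hz
  have hclΩ : closure Ω ⊆ closure (annulus N R₀ R₁) := closure_mono hΩA
  set w : EuclideanSpace ℝ (Fin N) → ℝ := fun z => u z - u (R z) with hw
  have key : ∀ z ∈ closure Ω, 0 ≤ w z := by
    apply aux_minPrinciple hΩo (aux_isBounded_annulus.subset hΩA)
    · intro y hy
      exact (aux_contDiffAt_of_annulus hu (hΩA hy)).sub
        ((aux_contDiffAt_of_annulus hu (hmapsA y (hΩA hy))).comp y hRc.contDiffAt)
    · apply ContinuousOn.sub (hu.continuousOn.mono hclΩ)
      exact (hu.continuousOn.comp R.continuous.continuousOn (fun z hz => hmapsC z (hclΩ hz)))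
    · intro y hy
      have hyA := hΩA hy
      have hRyA := hmapsA y hyA
      have hg : ContDiffAt ℝ 2 (fun z => u (R z)) y :=
        (aux_contDiffAt_of_annulus hu hRyA).comp y hRc.contDiffAt
      have h1 : lapl w y = lapl u y - lapl u (R y) := by
        rw [hw]
        rw [aux_lapl_sub (aux_contDiffAt_of_annulus hu hyA) hg,
          aux_lapl_comp R (aux_contDiffAt_of_annulus hu hRyA)]
      have h2 := hequ y hyA
      have h3 := hequ (R y) hRyA
      have h4 := hh' y hy
      simp only [hw, h1]
      linarith
    · intro y hy
      have := hbdry y hy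
      simp only [hw]
      linarith
  intro z hz
  have := key z hz
  simp only [hw] at this
  linarith

end AuxGeom

/-! ### Geometry of the axis and polar points -/

noncomputable def eLastV (N : ℕ) (hN : 3 ≤ N) : EuclideanSpace ℝ (Fin N) :=
  EuclideanSpace.single ⟨N - 1, by omega⟩ 1

noncomputable def eFirstV (N : ℕ) (hN : 3 ≤ N) : EuclideanSpace ℝ (Fin N) :=
  EuclideanSpace.single ⟨0, by omega⟩ 1

lemma lastCoord_eq_inner {N : ℕ} (hN : 3 ≤ N) (x : EuclideanSpace ℝ (Fin N)) :
    lastCoord x = inner ℝ x (eLastV N hN) := by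
  rw [lastCoord, dif_pos (by omega : 0 < N), eLastV, EuclideanSpace.inner_single_right]
  simp

lemma norm_eLastV {N : ℕ} (hN : 3 ≤ N) : ‖eLastV N hN‖ = 1 := by
  rw [eLastV, EuclideanSpace.norm_single]; simp

lemma abs_lastCoord_le {N : ℕ} (hN : 3 ≤ N) (x : EuclideanSpace ℝ (Fin N)) :
    |lastCoord x| ≤ ‖x‖ := by
  rw [lastCoord_eq_inner hN]
  calc |(inner ℝ x (eLastV N hN) : ℝ)| ≤ ‖x‖ * ‖eLastV N hN‖ := abs_real_inner_le_norm _ _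
  _ = ‖x‖ := by rw [norm_eLastV hN, mul_one]

lemma inner_eFirstV_eLastV {N : ℕ} (hN : 3 ≤ N) :
    (inner ℝ (eFirstV N hN) (eLastV N hN) : ℝ) = 0 := by
  rw [eLastV, EuclideanSpace.inner_single_right, eFirstV, EuclideanSpace.single_apply]
  have : ((⟨N-1, by omega⟩ : Fin N) = ⟨0, by omega⟩) = False := by
    simp [Fin.ext_iff]; omega
  simp [this]

lemma continuous_lastCoord {N : ℕ} (hN : 3 ≤ N) :
    Continuous (lastCoord : EuclideanSpace ℝ (Fin N) → ℝ) := by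
  have : (lastCoord : EuclideanSpace ℝ (Fin N) → ℝ)
      = fun z => (inner ℝ z (eLastV N hN) : ℝ) := funext (lastCoord_eq_inner hN)
  rw [this]
  exact continuous_id.inner continuous_const

noncomputable def ptOf (N : ℕ) (hN : 3 ≤ N) (r θ : ℝ) : EuclideanSpace ℝ (Fin N) :=
  (r * Real.cos θ) • eFirstV N hN + (r * Real.sin θ) • eLastV N hN

lemma norm_ptOf {N : ℕ} (hN : 3 ≤ N) {r : ℝ} (hr : 0 ≤ r) (θ : ℝ) : ‖ptOf N hN r θ‖ = r := by
  have hsq : ‖ptOf N hN r θ‖ ^ 2 = r ^ 2 := by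
    rw [ptOf, norm_add_sq_real]
    rw [real_inner_smul_left, real_inner_smul_right, inner_eFirstV_eLastV hN]
    simp only [norm_smul, Real.norm_eq_abs, norm_eLastV hN]
    rw [eFirstV, EuclideanSpace.norm_single]
    rw [mul_pow, mul_pow]
    simp only [sq_abs, norm_one, mul_one]
    nlinarith [Real.sin_sq_add_cos_sq θ]
  have h1 : ‖ptOf N hN r θ‖ = Real.sqrt (r ^ 2) := by
    rw [← hsq, Real.sqrt_sq (norm_nonneg _)]
  rw [h1, Real.sqrt_sq hr]

lemma lastCoord_ptOf {N : ℕ} (hN : 3 ≤ N) (r θ : ℝ) :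
    lastCoord (ptOf N hN r θ) = r * Real.sin θ := by
  rw [lastCoord_eq_inner hN, ptOf, inner_add_left, real_inner_smul_left, real_inner_smul_left,
    inner_eFirstV_eLastV hN, real_inner_self_eq_norm_sq, norm_eLastV hN]
  ring


/-- the linear problem `−Δu + u = h` with `h ∈ K` has its solution in `K`. -/
theorem statement3 (N : ℕ) (hN : 3 ≤ N) (R₀ R₁ : ℝ) (hR₀ : 0 < R₀) (hR : R₀ < R₁)
    (h u : EuclideanSpace ℝ (Fin N) → ℝ)
    (hh : memK N R₀ R₁ h)
    (hu : ContDiffOn ℝ 2 u (closure (annulus N R₀ R₁)))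
    (heq : ∀ x ∈ annulus N R₀ R₁, -lapl u x + u x = h x)
    (hbd : ∀ x : EuclideanSpace ℝ (Fin N), (‖x‖ = R₀ ∨ ‖x‖ = R₁) → u x = 0) :
    memK N R₀ R₁ u := by
  classical
  obtain ⟨⟨hhC1, hhNonneg, 𝔥, hrep, hEvenH, hAntiH⟩, hhbd⟩ := hh
  have hCA : closure (annulus N R₀ R₁)
      = {x : EuclideanSpace ℝ (Fin N) | R₀ ≤ ‖x‖ ∧ ‖x‖ ≤ R₁} :=
    aux_closure_annulus hR₀ hR
  have hfr : ∀ z : EuclideanSpace ℝ (Fin N), z ∈ closure (annulus N R₀ R₁) →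
      z ∉ annulus N R₀ R₁ → (‖z‖ = R₀ ∨ ‖z‖ = R₁) := by
    intro z hz hnz
    rw [hCA] at hz
    by_contra hcon
    push_neg at hcon
    exact hnz ⟨lt_of_le_of_ne hz.1 (Ne.symm hcon.1), lt_of_le_of_ne hz.2 hcon.2⟩
  -- invariance of u under linear isometries preserving h
  have hinv : ∀ R : EuclideanSpace ℝ (Fin N) ≃ₗᵢ[ℝ] EuclideanSpace ℝ (Fin N),
      (∀ z ∈ closure (annulus N R₀ R₁), h (R z) = h z) →
      ∀ z ∈ closure (annulus N R₀ R₁), u (R z) = u z := by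
    intro R hhR
    have hbry : ∀ (R' : EuclideanSpace ℝ (Fin N) ≃ₗᵢ[ℝ] EuclideanSpace ℝ (Fin N)),
        ∀ z ∈ closure (annulus N R₀ R₁) \ annulus N R₀ R₁, u (R' z) ≤ u z := by
      intro R' z hz
      have h1 := hfr z hz.1 hz.2
      have h2 : ‖R' z‖ = R₀ ∨ ‖R' z‖ = R₁ := by rw [R'.norm_map]; exact h1
      rw [hbd z h1, hbd (R' z) h2]
    have c1 := aux_compare hR₀ hR hu heq R aux_isOpen_annulus (subset_refl _)
      (fun z hz => (hhR z (subset_closure hz)).le) (hbry R)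
    have hhR' : ∀ z ∈ closure (annulus N R₀ R₁), h (R.symm z) = h z := by
      intro z hz
      have h1 : R.symm z ∈ closure (annulus N R₀ R₁) := by
        rw [hCA] at hz ⊢; simpa [R.symm.norm_map] using hz
      have := hhR (R.symm z) h1
      rw [R.apply_symm_apply] at this
      exact this.symm
    have c2 := aux_compare hR₀ hR hu heq R.symm aux_isOpen_annulus (subset_refl _)
      (fun z hz => (hhR' z (subset_closure hz)).le) (hbry R.symm)
    intro z hz
    have d1 := c1 z hz
    have hz2 : R z ∈ closure (annulus N R₀ R₁) := by
      rw [hCA] at hz ⊢; simpa [R.norm_map] using hz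
    have d2 := c2 (R z) hz2
    rw [R.symm_apply_apply] at d2
    linarith
  -- symmetry of u : equal norm and equal last coordinate give equal values
  have hsym : ∀ z w : EuclideanSpace ℝ (Fin N), z ∈ closure (annulus N R₀ R₁) →
      w ∈ closure (annulus N R₀ R₁) → ‖z‖ = ‖w‖ → lastCoord z = lastCoord w → u z = u w := by
    intro z w hz hw hnorm hlc
    have hENmem : eLastV N hN ∈ (Submodule.span ℝ {z - w})ᗮ := by
      apply Submodule.mem_orthogonal_singleton_iff_inner_left.mpr
      have e1 : (inner ℝ (eLastV N hN) z : ℝ) = lastCoord z := by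
        rw [lastCoord_eq_inner hN z, real_inner_comm]
      have e2 : (inner ℝ (eLastV N hN) w : ℝ) = lastCoord w := by
        rw [lastCoord_eq_inner hN w, real_inner_comm]
      rw [inner_sub_right, e1, e2, hlc, sub_self]
    set R := Submodule.reflection (Submodule.span ℝ {z - w})ᗮ with hRdef
    have hEN : R (eLastV N hN) = eLastV N hN := Submodule.reflection_mem_subspace_eq_self hENmem
    have hlcR : ∀ ζ : EuclideanSpace ℝ (Fin N), lastCoord (R ζ) = lastCoord ζ := by
      intro ζ
      rw [lastCoord_eq_inner hN, lastCoord_eq_inner hN]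
      conv_lhs => rw [← hEN]
      exact R.inner_map_map ζ (eLastV N hN)
    have hhRinv : ∀ ζ ∈ closure (annulus N R₀ R₁), h (R ζ) = h ζ := by
      intro ζ hζ
      have hζ2 : R ζ ∈ closure (annulus N R₀ R₁) := by
        rw [hCA] at hζ ⊢; simpa [R.norm_map] using hζ
      rw [hrep (R ζ) hζ2, hrep ζ hζ]
      rw [angleOf, angleOf, hlcR, R.norm_map]
    have hzz := hinv R hhRinv z hz
    have hRz : R z = w := Submodule.reflection_sub hnorm
    rw [hRz] at hzz
    exact hzz.symm
  -- evenness of u in the last coordinate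
  set S := Submodule.reflection ((Submodule.span ℝ {eLastV N hN})ᗮ) with hSdef
  have hSEN : S (eLastV N hN) = -(eLastV N hN) :=
    Submodule.reflection_mem_subspace_orthogonalComplement_eq_neg
      (Submodule.le_orthogonal_orthogonal _ (Submodule.subset_span rfl))
  have hlcS : ∀ ζ : EuclideanSpace ℝ (Fin N), lastCoord (S ζ) = -lastCoord ζ := by
    intro ζ
    rw [lastCoord_eq_inner hN, lastCoord_eq_inner hN]
    have e1 : (inner ℝ (S ζ) (eLastV N hN) : ℝ) = -(inner ℝ (S ζ) (S (eLastV N hN)) : ℝ) := by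
      rw [hSEN, inner_neg_right]; ring
    rw [e1, S.inner_map_map]
  have hueven : ∀ ζ ∈ closure (annulus N R₀ R₁), u (S ζ) = u ζ := by
    apply hinv
    intro ζ hζ
    have hζ2 : S ζ ∈ closure (annulus N R₀ R₁) := by
      rw [hCA] at hζ ⊢; simpa [S.norm_map] using hζ
    rw [hrep (S ζ) hζ2, hrep ζ hζ, angleOf, angleOf, hlcS, S.norm_map]
    rw [neg_div, Real.arcsin_neg]
    exact hEvenH ‖ζ‖ (by rw [hCA] at hζ; exact hζ) _ (Real.arcsin_mem_Icc _)
  -- symmetry with absolute last coordinate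
  have hsymabs : ∀ z w : EuclideanSpace ℝ (Fin N), z ∈ closure (annulus N R₀ R₁) →
      w ∈ closure (annulus N R₀ R₁) → ‖z‖ = ‖w‖ → |lastCoord z| = |lastCoord w| →
      u z = u w := by
    intro z w hz hw hnorm hlc
    rcases abs_eq_abs.mp hlc with h1 | h1
    · exact hsym z w hz hw hnorm h1
    · have hw2 : S w ∈ closure (annulus N R₀ R₁) := by
        rw [hCA] at hw ⊢; simpa [S.norm_map] using hw
      have e1 : u z = u (S w) := by
        apply hsym z (S w) hz hw2
        · rw [S.norm_map]; exact hnorm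
        · rw [hlcS]; exact h1
      rw [e1, hueven w hw]
  -- nonnegativity of u
  have hpos : ∀ x ∈ closure (annulus N R₀ R₁), 0 ≤ u x := by
    apply aux_minPrinciple aux_isOpen_annulus aux_isBounded_annulus
    · exact fun y hy => aux_contDiffAt_of_annulus hu hy
    · exact hu.continuousOn
    · intro y hy
      rw [heq y hy]
      exact hhNonneg y (subset_closure hy)
    · intro y hy
      rw [hbd y (hfr y hy.1 hy.2)]
  -- h in terms of the absolute last coordinate
  have hvalh : ∀ z ∈ annulus N R₀ R₁,
      h z = 𝔥 ‖z‖ (Real.arcsin (|lastCoord z| / ‖z‖)) := by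
    intro z hz
    rw [hrep z (subset_closure hz), angleOf]
    rcases le_or_gt 0 (lastCoord z) with hc | hc
    · rw [abs_of_nonneg hc]
    · have e1 : lastCoord z / ‖z‖ = -(|lastCoord z| / ‖z‖) := by
        rw [abs_of_neg hc]; ring
      rw [e1, Real.arcsin_neg]
      exact hEvenH ‖z‖ ⟨hz.1.le, hz.2.le⟩ _ (Real.arcsin_mem_Icc _)
  -- the monotonicity kernel
  have hmono : ∀ r θ₁ θ₂ : ℝ, R₀ < r → r < R₁ → 0 ≤ θ₁ → θ₁ < θ₂ → θ₂ ≤ π/2 →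
      u (ptOf N hN r θ₂) ≤ u (ptOf N hN r θ₁) := by
    intro r θ₁ θ₂ hr1 hr2 hθ₁0 h12 hθ₂2
    have hr0 : 0 < r := lt_trans hR₀ hr1
    have hn1 : ‖ptOf N hN r θ₁‖ = r := norm_ptOf hN hr0.le _
    have hn2 : ‖ptOf N hN r θ₂‖ = r := norm_ptOf hN hr0.le _
    set R := Submodule.reflection (Submodule.span ℝ {ptOf N hN r θ₁ - ptOf N hN r θ₂})ᗮ with hRdef
    have hRx : R (ptOf N hN r θ₁) = ptOf N hN r θ₂ := Submodule.reflection_sub (hn1.trans hn2.symm)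
    have hlcont := continuous_lastCoord hN
    set Ω : Set (EuclideanSpace ℝ (Fin N)) :=
      annulus N R₀ R₁ ∩ {z | |lastCoord z| < |lastCoord (R z)|} with hΩdef
    have hΩo : IsOpen Ω := aux_isOpen_annulus.inter
      (isOpen_lt hlcont.abs ((hlcont.comp R.continuous).abs))
    have hh' : ∀ z ∈ Ω, h (R z) ≤ h z := by
      intro z hz
      obtain ⟨hzA, hzlt⟩ := hz
      have hzn : 0 < ‖z‖ := lt_trans hR₀ hzA.1
      have hRzA : R z ∈ annulus N R₀ R₁ := by simpa [annulus, R.norm_map] using hzA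
      rw [hvalh z hzA, hvalh (R z) hRzA, R.norm_map]
      have hIcc : ‖z‖ ∈ Icc R₀ R₁ := ⟨hzA.1.le, hzA.2.le⟩
      have hm1 : Real.arcsin (|lastCoord z| / ‖z‖) ∈ Icc 0 (π/2) :=
        ⟨Real.arcsin_nonneg.mpr (div_nonneg (abs_nonneg _) (norm_nonneg _)),
          Real.arcsin_le_pi_div_two _⟩
      have hm2 : Real.arcsin (|lastCoord (R z)| / ‖z‖) ∈ Icc 0 (π/2) :=
        ⟨Real.arcsin_nonneg.mpr (div_nonneg (abs_nonneg _) (norm_nonneg _)),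
          Real.arcsin_le_pi_div_two _⟩
      apply hAntiH ‖z‖ hIcc hm1 hm2
      apply Real.monotone_arcsin
      exact (div_le_div_iff_of_pos_right hzn).mpr hzlt.le
    have hbdry : ∀ z ∈ closure Ω \ Ω, u (R z) ≤ u z := by
      intro z hz
      obtain ⟨hz1, hz2⟩ := hz
      have hcl1 : z ∈ closure (annulus N R₀ R₁) :=
        closure_mono inter_subset_left hz1
      have hcl2 : |lastCoord z| ≤ |lastCoord (R z)| := by
        have hsubcl : closure Ω ⊆ {ζ : EuclideanSpace ℝ (Fin N) |
            |lastCoord ζ| ≤ |lastCoord (R ζ)|} :=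
          closure_minimal (fun ζ hζ => show |lastCoord ζ| ≤ |lastCoord (R ζ)| from hζ.2.le)
            (isClosed_le hlcont.abs ((hlcont.comp R.continuous).abs))
        exact hsubcl hz1
      by_cases hzA : z ∈ annulus N R₀ R₁
      · have hne : ¬(|lastCoord z| < |lastCoord (R z)|) := fun hcon => hz2 ⟨hzA, hcon⟩
        have heqa : |lastCoord z| = |lastCoord (R z)| := le_antisymm hcl2 (not_lt.mp hne)
        have hRcl : R z ∈ closure (annulus N R₀ R₁) := by
          rw [hCA] at hcl1 ⊢; simpa [R.norm_map] using hcl1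
        exact (hsymabs (R z) z hRcl hcl1 (R.norm_map z) heqa.symm).le
      · have h1 := hfr z hcl1 hzA
        have h2 : ‖R z‖ = R₀ ∨ ‖R z‖ = R₁ := by rw [R.norm_map]; exact h1
        rw [hbd z h1, hbd (R z) h2]
    have hc := aux_compare hR₀ hR hu heq R hΩo inter_subset_left hh' hbdry
    have hπ := Real.pi_pos
    have hx₁Ω : ptOf N hN r θ₁ ∈ Ω := by
      constructor
      · exact ⟨by rw [hn1]; exact hr1, by rw [hn1]; exact hr2⟩
      · show |lastCoord (ptOf N hN r θ₁)| < |lastCoord (R (ptOf N hN r θ₁))|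
        rw [hRx, lastCoord_ptOf hN, lastCoord_ptOf hN]
        have hs1 : 0 ≤ Real.sin θ₁ :=
          Real.sin_nonneg_of_nonneg_of_le_pi hθ₁0 (by linarith)
        have hs2 : 0 ≤ Real.sin θ₂ :=
          Real.sin_nonneg_of_nonneg_of_le_pi (by linarith) (by linarith)
        rw [abs_of_nonneg (mul_nonneg hr0.le hs1), abs_of_nonneg (mul_nonneg hr0.le hs2)]
        have hss : Real.sin θ₁ < Real.sin θ₂ :=
          Real.strictMonoOn_sin ⟨by linarith, by linarith⟩ ⟨by linarith, hθ₂2⟩ h12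
        exact mul_lt_mul_of_pos_left hss hr0
    have hfin := hc _ (subset_closure hx₁Ω)
    rw [hRx] at hfin
    exact hfin
  -- assemble membership in K
  refine ⟨⟨hu.of_le one_le_two, hpos, fun r θ => u (ptOf N hN r θ), ?_, ?_, ?_⟩, hbd⟩
  · -- axially symmetric representative
    intro x hx
    have hx' := hx
    rw [hCA] at hx'
    have hxn : 0 < ‖x‖ := lt_of_lt_of_le hR₀ hx'.1
    have hpt : ptOf N hN ‖x‖ (angleOf x) ∈ closure (annulus N R₀ R₁) := by
      rw [hCA]
      constructor <;> rw [norm_ptOf hN (norm_nonneg x)]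
      · exact hx'.1
      · exact hx'.2
    apply hsym x (ptOf N hN ‖x‖ (angleOf x)) hx hpt (norm_ptOf hN (norm_nonneg x) _).symm
    have hb1 : |lastCoord x / ‖x‖| ≤ 1 := by
      rw [abs_div, abs_of_pos hxn]
      exact div_le_one_of_le₀ (abs_lastCoord_le hN x) hxn.le
    obtain ⟨hb2, hb3⟩ := abs_le.mp hb1
    rw [lastCoord_ptOf hN, angleOf, Real.sin_arcsin hb2 hb3,
      mul_div_cancel₀ _ (ne_of_gt hxn)]
  · -- evenness
    intro r hrIcc θ hθ
    have hr0 : (0:ℝ) ≤ r := le_trans hR₀.le hrIcc.1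
    have hp1 : ptOf N hN r (-θ) ∈ closure (annulus N R₀ R₁) := by
      rw [hCA]
      constructor <;> rw [norm_ptOf hN hr0]
      · exact hrIcc.1
      · exact hrIcc.2
    have hp2 : ptOf N hN r θ ∈ closure (annulus N R₀ R₁) := by
      rw [hCA]
      constructor <;> rw [norm_ptOf hN hr0]
      · exact hrIcc.1
      · exact hrIcc.2
    apply hsymabs _ _ hp1 hp2
    · rw [norm_ptOf hN hr0, norm_ptOf hN hr0]
    · rw [lastCoord_ptOf hN, lastCoord_ptOf hN, Real.sin_neg]
      rw [mul_neg, abs_neg]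
  · -- monotonicity in θ
    intro r hrIcc θ₁ hθ₁ θ₂ hθ₂ h12
    have hr0 : (0:ℝ) ≤ r := le_trans hR₀.le hrIcc.1
    show u (ptOf N hN r θ₂) ≤ u (ptOf N hN r θ₁)
    rcases eq_or_lt_of_le h12 with rfl | hlt
    · exact le_refl _
    rcases eq_or_lt_of_le hrIcc.1 with hr1 | hr1
    · have e2 : u (ptOf N hN r θ₂) = 0 :=
        hbd _ (Or.inl (by rw [norm_ptOf hN hr0]; exact hr1.symm))
      have e1 : u (ptOf N hN r θ₁) = 0 :=
        hbd _ (Or.inl (by rw [norm_ptOf hN hr0]; exact hr1.symm))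
      rw [e1, e2]
    rcases eq_or_lt_of_le hrIcc.2 with hr2 | hr2
    · have e2 : u (ptOf N hN r θ₂) = 0 :=
        hbd _ (Or.inr (by rw [norm_ptOf hN hr0]; exact hr2))
      have e1 : u (ptOf N hN r θ₁) = 0 :=
        hbd _ (Or.inr (by rw [norm_ptOf hN hr0]; exact hr2))
      rw [e1, e2]
    · exact hmono r θ₁ θ₂ hr1 hr2 hθ₁.1 hlt hθ₂.2
end

section
/- Assume a ∈ K̂ with a > 0 on the closure of A, let p > 2, and let u ∈ K. If v is a C² function on the closure of A satisfying −Δv + v = a(x) u(x)^{p−1} pointwise in A and v = 0 on ∂A, then v ∈ K. -/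
open MeasureTheory Real Set

open scoped RealInnerProductSpace

namespace Aux
noncomputable section
variable {N : ℕ}

variable {N : ℕ}

/-- closure of the annulus -/
theorem closure_annulus {R₀ R₁ : ℝ} (h0 : 0 < R₀) (h1 : R₀ < R₁) :
    closure (annulus N R₀ R₁) = {x | R₀ ≤ ‖x‖ ∧ ‖x‖ ≤ R₁} := by
  apply Subset.antisymm
  · apply closure_minimal
    · intro x hx; exact ⟨hx.1.le, hx.2.le⟩
    · exact IsClosed.inter (isClosed_le continuous_const continuous_norm)
        (isClosed_le continuous_norm continuous_const)
  · intro x hx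
    obtain ⟨hx0, hx1⟩ := hx
    have hxn : (0:ℝ) < ‖x‖ := lt_of_lt_of_le h0 hx0
    set m : ℝ := (R₀ + R₁) / 2 with hm
    have hmx : R₀ < m := by simp [hm]; linarith
    have hmy : m < R₁ := by simp [hm]; linarith
    have hten : Filter.Tendsto (fun s : ℝ => (1 + s * (m / ‖x‖ - 1)) • x) (nhdsWithin 0 (Ioi 0)) (nhds x) := by
      have : Filter.Tendsto (fun s : ℝ => (1 + s * (m / ‖x‖ - 1))) (nhdsWithin 0 (Ioi 0)) (nhds 1) := by
        apply Filter.Tendsto.mono_left ?_ nhdsWithin_le_nhds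
        have hc : Continuous (fun s : ℝ => (1 + s * (m / ‖x‖ - 1))) := by continuity
        have := hc.tendsto (0:ℝ)
        simpa using this
      simpa using this.smul (tendsto_const_nhds (x := x))
    apply mem_closure_of_tendsto hten
    filter_upwards [Ioo_mem_nhdsGT_of_mem (by constructor <;> norm_num : (0:ℝ) ∈ Ico 0 1)] with s hs
    have hs0 : 0 < s := hs.1
    have hs1 : s < 1 := hs.2
    have hpos : 0 < 1 + s * (m / ‖x‖ - 1) := by
      rcases le_or_gt (m / ‖x‖) 1 with h | h
      · have h2 : 0 < m / ‖x‖ := div_pos (by linarith) hxn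
        nlinarith
      · nlinarith
    have hnorm : ‖(1 + s * (m / ‖x‖ - 1)) • x‖ = (1-s) * ‖x‖ + s * m := by
      rw [norm_smul, Real.norm_eq_abs, abs_of_pos hpos]
      field_simp
      ring
    constructor
    · show R₀ < _
      rw [hnorm]; nlinarith
    · show _ < R₁
      rw [hnorm]; nlinarith


variable {N : ℕ}

theorem secondDeriv_nonneg {w : EuclideanSpace ℝ (Fin N) → ℝ} {x₀ : EuclideanSpace ℝ (Fin N)}
    (hw : ContDiffAt ℝ 2 w x₀) (hmin : IsLocalMin w x₀) (e : EuclideanSpace ℝ (Fin N)) :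
    0 ≤ fderiv ℝ (fun y => fderiv ℝ w y e) x₀ e := by
  obtain ⟨U, hUn, hU⟩ := hw.contDiffOn (le_refl 2) (by simp)
  rw [mem_nhds_iff] at hUn
  obtain ⟨V, hVU, hVo, hxV⟩ := hUn
  have hV : ContDiffOn ℝ 2 w V := hU.mono hVU
  have hdiff : ∀ y ∈ V, HasFDerivAt w (fderiv ℝ w y) y := by
    intro y hy
    exact ((hV.contDiffAt (hVo.mem_nhds hy)).differentiableAt (by norm_num)).hasFDerivAt
  have hΦ : ContDiffAt ℝ 1 (fderiv ℝ w) x₀ := hw.fderiv_right (by norm_num)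
  have hΦd : DifferentiableAt ℝ (fderiv ℝ w) x₀ := hΦ.differentiableAt (by norm_num)
  set ℓ : ℝ → EuclideanSpace ℝ (Fin N) := fun t => x₀ + t • e with hℓdef
  have hℓ : ∀ t : ℝ, HasDerivAt ℓ e t := by
    intro t
    simpa [hℓdef] using ((hasDerivAt_id t).smul_const e).const_add x₀
  have hℓc : Continuous ℓ := by
    apply continuous_const.add (continuous_id.smul continuous_const)
  have hℓ0 : ℓ 0 = x₀ := by simp [hℓdef]
  set g : ℝ → ℝ := fun t => w (ℓ t) with hgdef
  set g' : ℝ → ℝ := fun t => fderiv ℝ w (ℓ t) e with hg'def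
  have hg : ∀ t : ℝ, ℓ t ∈ V → HasDerivAt g (g' t) t := by
    intro t ht
    exact (hdiff _ ht).comp_hasDerivAt t (hℓ t)
  set D : EuclideanSpace ℝ (Fin N) →L[ℝ] ℝ := (fderiv ℝ (fderiv ℝ w) x₀).flip e with hDdef
  have hD : HasFDerivAt (fun y => fderiv ℝ w y e) D x₀ := by
    have := hΦd.hasFDerivAt.clm_apply (hasFDerivAt_const e x₀)
    simpa [hDdef] using this
  have key : fderiv ℝ (fun y => fderiv ℝ w y e) x₀ e = D e := by rw [hD.fderiv]
  have hg'c : HasDerivAt g' (D e) 0 := by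
    rw [← hℓ0] at hD
    exact hD.comp_hasDerivAt 0 (hℓ 0)
  have hgmin : IsLocalMin g 0 := by
    have ht : Filter.Tendsto ℓ (nhds 0) (nhds x₀) := by
      rw [← hℓ0]; exact hℓc.tendsto 0
    have := ht.eventually hmin
    simpa [IsLocalMin, IsMinFilter, hgdef, hℓ0] using this
  have hg'0 : g' 0 = 0 := hgmin.hasDerivAt_eq_zero (hg 0 (by rw [hℓ0]; exact hxV))
  rw [key]
  by_contra hcon
  push_neg at hcon
  set c : ℝ := D e with hcdef
  have h1 : ∀ᶠ t : ℝ in nhds 0, ‖g' t - g' 0 - (t - 0) • c‖ ≤ (-c/2) * ‖t - 0‖ := by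
    have := hg'c.isLittleO
    exact this.def (by linarith)
  have h2 : ∀ᶠ t : ℝ in nhds 0, ℓ t ∈ V := by
    have : ℓ ⁻¹' V ∈ nhds (0:ℝ) := by
      apply (hVo.preimage hℓc).mem_nhds
      simp [hℓ0, hxV]
    exact this
  have h3 : ∀ᶠ t : ℝ in nhds 0, g 0 ≤ g t := hgmin
  obtain ⟨δ, hδ0, hδ⟩ := Metric.eventually_nhds_iff.mp ((h1.and h2).and h3)
  have hg'neg : ∀ t ∈ Ioo (0:ℝ) δ, g' t < 0 := by
    intro t ht
    have hb := (hδ (show dist t 0 < δ by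
      rw [Real.dist_eq, sub_zero, abs_of_pos ht.1]; exact ht.2)).1.1
    rw [hg'0] at hb
    simp only [sub_zero, smul_eq_mul] at hb
    rw [Real.norm_eq_abs, Real.norm_eq_abs, abs_of_pos ht.1] at hb
    have := abs_le.mp hb
    nlinarith [ht.1]
  have hmem : ∀ t ∈ Icc (0:ℝ) (δ/2), ℓ t ∈ V := by
    intro t ht
    rcases eq_or_lt_of_le ht.1 with h | h
    · rw [← h, hℓ0]; exact hxV
    · exact (hδ (show dist t 0 < δ by
        rw [Real.dist_eq, sub_zero, abs_of_pos h]; linarith [ht.2])).1.2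
  have hanti : StrictAntiOn g (Icc 0 (δ/2)) := by
    apply strictAntiOn_of_deriv_neg (convex_Icc _ _)
    · intro t ht
      exact (hg t (hmem t ht)).continuousAt.continuousWithinAt
    · intro t ht
      rw [interior_Icc] at ht
      rw [(hg t (hmem t ⟨ht.1.le, ht.2.le⟩)).deriv]
      exact hg'neg t ⟨ht.1, by linarith [ht.2]⟩
  have hlt : g (δ/2) < g 0 := by
    apply hanti (by constructor <;> linarith) (by constructor <;> linarith) (by linarith)
  have hge : g 0 ≤ g (δ/2) :=
    (hδ (show dist (δ/2) 0 < δ by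
      rw [Real.dist_eq, sub_zero, abs_of_pos (by linarith)]; linarith)).2
  linarith

theorem lapl_nonneg {w : EuclideanSpace ℝ (Fin N) → ℝ} {x₀ : EuclideanSpace ℝ (Fin N)}
    (hw : ContDiffAt ℝ 2 w x₀) (hmin : IsLocalMin w x₀) : 0 ≤ lapl w x₀ :=
  Finset.sum_nonneg fun i _ => secondDeriv_nonneg hw hmin _

theorem maxprin {Ω : Set (EuclideanSpace ℝ (Fin N))} (hΩo : IsOpen Ω)
    (hΩb : Bornology.IsBounded Ω)
    {w : EuclideanSpace ℝ (Fin N) → ℝ} (hc : ContinuousOn w (closure Ω))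
    (hw2 : ∀ x ∈ Ω, ContDiffAt ℝ 2 w x)
    (hineq : ∀ x ∈ Ω, 0 ≤ -lapl w x + w x)
    (hbdry : ∀ x ∈ closure Ω \ Ω, 0 ≤ w x) : ∀ x ∈ closure Ω, 0 ≤ w x := by
  rcases (closure Ω).eq_empty_or_nonempty with h | h
  · intro x hx; rw [h] at hx; exact absurd hx (notMem_empty x)
  have hcpt : IsCompact (closure Ω) := hΩb.isCompact_closure
  obtain ⟨x₀, hx₀m, hx₀min⟩ := hcpt.exists_isMinOn h hc
  intro x hx
  rcases le_or_gt 0 (w x₀) with h0 | h0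
  · exact le_trans h0 (isMinOn_iff.mp hx₀min x hx)
  exfalso
  have hx₀Ω : x₀ ∈ Ω := by
    by_contra hne
    exact absurd (hbdry x₀ ⟨hx₀m, hne⟩) (not_le.mpr h0)
  have hmin : IsLocalMin w x₀ := by
    have hmem : closure Ω ∈ nhds x₀ := Filter.mem_of_superset (hΩo.mem_nhds hx₀Ω) subset_closure
    exact Filter.eventually_of_mem hmem (fun y hy => isMinOn_iff.mp hx₀min y hy)
  have h1 := lapl_nonneg (hw2 x₀ hx₀Ω) hmin
  have h2 := hineq x₀ hx₀Ω
  linarith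


variable {N : ℕ}

/-- Reflection across the hyperplane orthogonal to `n` (when `‖n‖ = 1`), as a CLM. -/
def reflMap (n : EuclideanSpace ℝ (Fin N)) :
    EuclideanSpace ℝ (Fin N) →L[ℝ] EuclideanSpace ℝ (Fin N) :=
  ContinuousLinearMap.id ℝ _ - (2:ℝ) • (innerSL ℝ n).smulRight n

theorem reflMap_apply (n x : EuclideanSpace ℝ (Fin N)) :
    reflMap n x = x - (2 * ⟪n, x⟫) • n := by
  simp [reflMap, ContinuousLinearMap.smul_apply, ContinuousLinearMap.sub_apply,
    ContinuousLinearMap.smulRight_apply, innerSL_apply_apply, smul_smul]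

theorem norm_reflMap {n : EuclideanSpace ℝ (Fin N)} (hn : ‖n‖ = 1)
    (x : EuclideanSpace ℝ (Fin N)) : ‖reflMap n x‖ = ‖x‖ := by
  have hsq : ‖reflMap n x‖ ^ 2 = ‖x‖ ^ 2 := by
    rw [reflMap_apply, norm_sub_sq_real, real_inner_smul_right, norm_smul, real_inner_comm]
    rw [mul_pow, Real.norm_eq_abs, sq_abs, hn]
    ring
  calc ‖reflMap n x‖ = Real.sqrt (‖reflMap n x‖ ^ 2) := (Real.sqrt_sq (norm_nonneg _)).symm
    _ = Real.sqrt (‖x‖ ^ 2) := by rw [hsq]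
    _ = ‖x‖ := Real.sqrt_sq (norm_nonneg _)

theorem hasFDerivAt_fderiv_apply {f : EuclideanSpace ℝ (Fin N) → ℝ}
    {x : EuclideanSpace ℝ (Fin N)} (hf : ContDiffAt ℝ 2 f x) (e : EuclideanSpace ℝ (Fin N)) :
    HasFDerivAt (fun y => fderiv ℝ f y e) ((fderiv ℝ (fderiv ℝ f) x).flip e) x := by
  have hΦd : DifferentiableAt ℝ (fderiv ℝ f) x := by
    have h1 : ContDiffAt ℝ 1 (fderiv ℝ f) x := hf.fderiv_right (by norm_num)
    exact h1.differentiableAt (by norm_num)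
  simpa using hΦd.hasFDerivAt.clm_apply (hasFDerivAt_const e x)

theorem lapl_sub {f g : EuclideanSpace ℝ (Fin N) → ℝ} {x : EuclideanSpace ℝ (Fin N)}
    (hf : ContDiffAt ℝ 2 f x) (hg : ContDiffAt ℝ 2 g x) :
    lapl (fun y => f y - g y) x = lapl f x - lapl g x := by
  have hi : ∀ i : Fin N,
      fderiv ℝ (fun y => fderiv ℝ (fun z => f z - g z) y (EuclideanSpace.single i 1)) x
        (EuclideanSpace.single i 1)
      = fderiv ℝ (fun y => fderiv ℝ f y (EuclideanSpace.single i 1)) x (EuclideanSpace.single i 1)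
        - fderiv ℝ (fun y => fderiv ℝ g y (EuclideanSpace.single i 1)) x
            (EuclideanSpace.single i 1) := by
    intro i
    set e : EuclideanSpace ℝ (Fin N) := EuclideanSpace.single i 1
    have hDA := hasFDerivAt_fderiv_apply hf e
    have hDB := hasFDerivAt_fderiv_apply hg e
    have hev : (fun y => fderiv ℝ (fun z => f z - g z) y e)
        =ᶠ[nhds x] (fun y => fderiv ℝ f y e - fderiv ℝ g y e) := by
      filter_upwards [hf.eventually (by simp), hg.eventually (by simp)] with y hfy hgy
      rw [fderiv_fun_sub (hfy.differentiableAt (by norm_num)) (hgy.differentiableAt (by norm_num))]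
      simp [ContinuousLinearMap.sub_apply]
    rw [hev.fderiv_eq, (hDA.fun_sub hDB).fderiv, hDA.fderiv, hDB.fderiv]
    simp [ContinuousLinearMap.sub_apply]
  unfold lapl
  rw [← Finset.sum_sub_distrib]
  exact Finset.sum_congr rfl fun i _ => hi i

theorem sum_coord_smul_single (n : EuclideanSpace ℝ (Fin N)) :
    ∑ i : Fin N, (n i) • (EuclideanSpace.single i (1:ℝ)) = n := by
  have h := (EuclideanSpace.basisFun (Fin N) ℝ).sum_repr n
  simpa [EuclideanSpace.basisFun_apply, EuclideanSpace.basisFun_repr] using h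

theorem sum_coord_sq (n : EuclideanSpace ℝ (Fin N)) (hn : ‖n‖ = 1) :
    ∑ i : Fin N, (n i) * (n i) = 1 := by
  have h1 : ⟪n, n⟫ = 1 := by rw [real_inner_self_eq_norm_sq, hn]; norm_num
  rw [← h1, PiLp.inner_apply]
  simp [RCLike.inner_apply]
  simp only [sq]

theorem lapl_comp_refl {n : EuclideanSpace ℝ (Fin N)} (hn : ‖n‖ = 1)
    {v : EuclideanSpace ℝ (Fin N) → ℝ} {x : EuclideanSpace ℝ (Fin N)}
    (hv : ContDiffAt ℝ 2 v (reflMap n x)) :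
    lapl (fun y => v (reflMap n y)) x = lapl v (reflMap n x) := by
  set S := reflMap n with hS
  set M := fderiv ℝ (fderiv ℝ v) (S x) with hM
  have hMd : DifferentiableAt ℝ (fderiv ℝ v) (S x) := by
    have h1 : ContDiffAt ℝ 1 (fderiv ℝ v) (S x) := hv.fderiv_right (by norm_num)
    exact h1.differentiableAt (by norm_num)
  have hterm : ∀ e : EuclideanSpace ℝ (Fin N),
      fderiv ℝ (fun y => fderiv ℝ (fun z => v (S z)) y e) x e = M (S e) (S e) := by
    intro e
    have hev : (fun y => fderiv ℝ (fun z => v (S z)) y e)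
        =ᶠ[nhds x] (fun y => fderiv ℝ v (S y) (S e)) := by
      have hpull : ∀ᶠ y in nhds x, ContDiffAt ℝ 2 v (S y) :=
        (S.continuous.tendsto x).eventually (hv.eventually (by simp))
      filter_upwards [hpull] with y hvy
      have hcomp : HasFDerivAt (fun z => v (S z)) ((fderiv ℝ v (S y)).comp S) y :=
        ((hvy.differentiableAt (by norm_num)).hasFDerivAt).comp y S.hasFDerivAt
      rw [hcomp.fderiv]
      rfl
    have hc : HasFDerivAt (fun y => fderiv ℝ v (S y)) (M.comp S) x :=
      hMd.hasFDerivAt.comp x S.hasFDerivAt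
    have hb : HasFDerivAt (fun y => fderiv ℝ v (S y) (S e)) ((M.comp S).flip (S e)) x := by
      simpa using hc.clm_apply (hasFDerivAt_const (S e) x)
    rw [hev.fderiv_eq, hb.fderiv]
    rfl
  have hterm' : ∀ e : EuclideanSpace ℝ (Fin N),
      fderiv ℝ (fun y => fderiv ℝ v y e) (S x) e = M e e := by
    intro e
    rw [(hasFDerivAt_fderiv_apply hv e).fderiv]
    rfl
  unfold lapl
  have hSe : ∀ i : Fin N, S (EuclideanSpace.single i 1)
      = EuclideanSpace.single i 1 - (2 * n i) • n := by
    intro i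
    rw [hS, reflMap_apply]
    congr 2
    rw [EuclideanSpace.inner_single_right]
    simp
  calc ∑ i : Fin N, fderiv ℝ (fun y => fderiv ℝ (fun z => v (S z)) y
          (EuclideanSpace.single i 1)) x (EuclideanSpace.single i 1)
      = ∑ i : Fin N, M (S (EuclideanSpace.single i 1)) (S (EuclideanSpace.single i 1)) := by
        exact Finset.sum_congr rfl fun i _ => hterm _
    _ = ∑ i : Fin N, (M (EuclideanSpace.single i 1) (EuclideanSpace.single i 1)
          - (2 * n i) * (M (EuclideanSpace.single i 1) n)
          - (2 * n i) * (M n (EuclideanSpace.single i 1))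
          + (2 * n i) * (2 * n i) * (M n n)) := by
        refine Finset.sum_congr rfl fun i _ => ?_
        rw [hSe i]
        simp only [map_sub, _root_.map_smul, ContinuousLinearMap.sub_apply,
          ContinuousLinearMap.smul_apply, smul_eq_mul]
        ring
    _ = ∑ i : Fin N, M (EuclideanSpace.single i 1) (EuclideanSpace.single i 1) := by
        rw [Finset.sum_add_distrib, Finset.sum_sub_distrib, Finset.sum_sub_distrib]
        have hA : ∑ i : Fin N, (2 * n i) * (M (EuclideanSpace.single i 1)) n = 2 * M n n := by
          have h2 : M n = ∑ i : Fin N, n i • M (EuclideanSpace.single i 1) := by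
            conv_lhs => rw [← sum_coord_smul_single n]
            rw [_root_.map_sum]
            simp [_root_.map_smul]
          have h1 : M n n = ∑ i : Fin N, n i * (M (EuclideanSpace.single i 1)) n := by
            rw [h2, ContinuousLinearMap.sum_apply]
            simp [ContinuousLinearMap.smul_apply]
          rw [h1, Finset.mul_sum]
          exact Finset.sum_congr rfl fun i _ => by ring
        have hB : ∑ i : Fin N, (2 * n i) * (M n (EuclideanSpace.single i 1)) = 2 * M n n := by
          set K := M n with hK
          have h1 : K n = ∑ i : Fin N, n i * K (EuclideanSpace.single i 1) := by
            conv_lhs => rw [← sum_coord_smul_single n]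
            rw [_root_.map_sum]
            simp [_root_.map_smul]
          rw [h1, Finset.mul_sum]
          exact Finset.sum_congr rfl fun i _ => by ring
        have hC : ∑ i : Fin N, (2 * n i) * (2 * n i) * (M n n) = 4 * M n n := by
          have : ∑ i : Fin N, (2 * n i) * (2 * n i) * (M n n)
              = (∑ i : Fin N, (n i) * (n i)) * (4 * M n n) := by
            rw [Finset.sum_mul]
            exact Finset.sum_congr rfl fun i _ => by ring
          rw [this, sum_coord_sq n hn]; ring
        rw [hA, hB, hC]; ring
    _ = ∑ i : Fin N, fderiv ℝ (fun y => fderiv ℝ v y (EuclideanSpace.single i 1)) (S x)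
          (EuclideanSpace.single i 1) := by
        exact Finset.sum_congr rfl fun i _ => (hterm' _).symm


section Geo
variable (hN : 3 ≤ N)

def eOne : EuclideanSpace ℝ (Fin N) :=
  EuclideanSpace.single ⟨0, by omega⟩ 1

def eLast : EuclideanSpace ℝ (Fin N) :=
  EuclideanSpace.single ⟨N - 1, by omega⟩ 1

theorem norm_eOne : ‖eOne hN‖ = 1 := by simp [eOne]

theorem norm_eLast : ‖eLast hN‖ = 1 := by simp [eLast]

theorem inner_eOne_eOne : ⟪eOne hN, eOne hN⟫ = 1 := by
  rw [real_inner_self_eq_norm_sq, norm_eOne]; norm_num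

theorem inner_eLast_eLast : ⟪eLast hN, eLast hN⟫ = 1 := by
  rw [real_inner_self_eq_norm_sq, norm_eLast]; norm_num

theorem inner_eOne_eLast : ⟪eOne hN, eLast hN⟫ = 0 := by
  rw [eOne, eLast, EuclideanSpace.inner_single_left]
  simp [EuclideanSpace.single_apply]
  intro h
  omega

theorem inner_eLast_eOne : ⟪eLast hN, eOne hN⟫ = 0 := by
  rw [real_inner_comm]; exact inner_eOne_eLast hN

theorem lastCoord_eq (x : EuclideanSpace ℝ (Fin N)) :
    lastCoord x = ⟪eLast hN, x⟫ := by
  have h0 : 0 < N := by omega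
  rw [lastCoord, dif_pos h0, eLast, EuclideanSpace.inner_single_left]
  simp

include hN in
theorem abs_lastCoord_le (x : EuclideanSpace ℝ (Fin N)) : |lastCoord x| ≤ ‖x‖ := by
  rw [lastCoord_eq hN]
  have := abs_real_inner_le_norm (eLast hN) x
  rwa [norm_eLast hN, one_mul] at this

def pt (r θ : ℝ) : EuclideanSpace ℝ (Fin N) :=
  (r * Real.cos θ) • eOne hN + (r * Real.sin θ) • eLast hN

theorem norm_combo (s t : ℝ) : ‖s • eOne hN + t • eLast hN‖ = Real.sqrt (s^2 + t^2) := by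
  rw [@norm_eq_sqrt_real_inner]
  congr 1
  simp only [inner_add_left, inner_add_right, real_inner_smul_left, real_inner_smul_right,
    inner_eOne_eOne hN, inner_eLast_eLast hN, inner_eOne_eLast hN, inner_eLast_eOne hN]
  ring

theorem norm_pt {r : ℝ} (hr : 0 ≤ r) (θ : ℝ) : ‖pt hN r θ‖ = r := by
  rw [pt, norm_combo hN]
  have h : (r * Real.cos θ)^2 + (r * Real.sin θ)^2 = r^2 := by
    have := Real.sin_sq_add_cos_sq θ
    nlinarith
  rw [h, Real.sqrt_sq hr]

theorem lastCoord_pt (r θ : ℝ) : lastCoord (pt hN r θ) = r * Real.sin θ := by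
  rw [lastCoord_eq hN, pt, inner_add_right, real_inner_smul_right, real_inner_smul_right,
    inner_eLast_eOne hN, inner_eLast_eLast hN]
  ring

theorem angleOf_pt {r θ : ℝ} (hr : 0 < r) (hθ : θ ∈ Icc (-(π/2)) (π/2)) :
    angleOf (pt hN r θ) = θ := by
  rw [angleOf, lastCoord_pt hN, norm_pt hN hr.le]
  rw [mul_comm, mul_div_assoc, div_self hr.ne', mul_one]
  exact Real.arcsin_sin hθ.1 hθ.2

end Geo

section Transfer
variable {R₀ R₁ : ℝ}

theorem mem_closure_annulus_iff (h0 : 0 < R₀) (h1 : R₀ < R₁)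
    {x : EuclideanSpace ℝ (Fin N)} :
    x ∈ closure (annulus N R₀ R₁) ↔ R₀ ≤ ‖x‖ ∧ ‖x‖ ≤ R₁ := by
  rw [closure_annulus h0 h1]; rfl

/-- Transfer of the monotonicity of the representative to comparisons of values. -/
theorem rep_le (hN : 3 ≤ N) (h0 : 0 < R₀) (h1 : R₀ < R₁)
    {h : EuclideanSpace ℝ (Fin N) → ℝ} {𝔥 : ℝ → ℝ → ℝ}
    (hrep : ∀ x ∈ closure (annulus N R₀ R₁), h x = 𝔥 ‖x‖ (angleOf x))
    (heven : ∀ r ∈ Icc R₀ R₁, ∀ θ ∈ Icc (-(π/2)) (π/2), 𝔥 r (-θ) = 𝔥 r θ)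
    (hanti : ∀ r ∈ Icc R₀ R₁, AntitoneOn (𝔥 r) (Icc 0 (π/2)))
    {x y : EuclideanSpace ℝ (Fin N)} (hx : x ∈ closure (annulus N R₀ R₁))
    (hy : y ∈ closure (annulus N R₀ R₁))
    (hnorm : ‖x‖ = ‖y‖) (hlc : |lastCoord x| ≤ |lastCoord y|) : h y ≤ h x := by
  have key : ∀ z ∈ closure (annulus N R₀ R₁),
      h z = 𝔥 ‖z‖ (Real.arcsin (|lastCoord z| / ‖z‖)) := by
    intro z hz
    have hzn : 0 < ‖z‖ := lt_of_lt_of_le h0 ((mem_closure_annulus_iff h0 h1).mp hz).1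
    rw [hrep z hz, angleOf]
    rcases le_or_gt 0 (lastCoord z) with hpos | hneg
    · rw [abs_of_nonneg hpos]
    · have habs : lastCoord z / ‖z‖ = -(|lastCoord z| / ‖z‖) := by
        rw [abs_of_neg hneg]; ring
      rw [habs, Real.arcsin_neg]
      exact heven ‖z‖ ((mem_closure_annulus_iff h0 h1).mp hz)
        (Real.arcsin (|lastCoord z| / ‖z‖))
        ⟨Real.neg_pi_div_two_le_arcsin _, Real.arcsin_le_pi_div_two _⟩
  have hxn : 0 < ‖x‖ := lt_of_lt_of_le h0 ((mem_closure_annulus_iff h0 h1).mp hx).1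
  rw [key x hx, key y hy, ← hnorm]
  have hdiv : |lastCoord x| / ‖x‖ ≤ |lastCoord y| / ‖x‖ := by gcongr
  have hrmem : ‖x‖ ∈ Icc R₀ R₁ := by
    have := (mem_closure_annulus_iff h0 h1).mp hx
    exact ⟨this.1, this.2⟩
  have m1 : Real.arcsin (|lastCoord x| / ‖x‖) ∈ Icc 0 (π/2) :=
    ⟨Real.arcsin_nonneg.mpr (by positivity), Real.arcsin_le_pi_div_two _⟩
  have m2 : Real.arcsin (|lastCoord y| / ‖x‖) ∈ Icc 0 (π/2) :=
    ⟨Real.arcsin_nonneg.mpr (by positivity), Real.arcsin_le_pi_div_two _⟩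
  exact hanti ‖x‖ hrmem m1 m2 (Real.monotone_arcsin hdiv)

end Transfer

section PDE
variable {R₀ R₁ : ℝ}

theorem annulus_isOpen : IsOpen (annulus N R₀ R₁) :=
  IsOpen.inter (isOpen_lt continuous_const continuous_norm)
    (isOpen_lt continuous_norm continuous_const)

theorem annulus_isBounded : Bornology.IsBounded (annulus N R₀ R₁) := by
  apply (Metric.isBounded_closedBall (x := (0 : EuclideanSpace ℝ (Fin N))) (r := R₁)).subset
  intro x hx
  rw [Metric.mem_closedBall, dist_zero_right]
  exact hx.2.le

theorem frontier_mem (hR₀ : 0 < R₀) (hR : R₀ < R₁) {x : EuclideanSpace ℝ (Fin N)}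
    (hx : x ∈ closure (annulus N R₀ R₁)) (hxn : x ∉ annulus N R₀ R₁) :
    ‖x‖ = R₀ ∨ ‖x‖ = R₁ := by
  have h := (mem_closure_annulus_iff hR₀ hR).mp hx
  have hxn' : ¬(R₀ < ‖x‖ ∧ ‖x‖ < R₁) := hxn
  push_neg at hxn'
  rcases eq_or_lt_of_le h.1 with he | hlt
  · exact Or.inl he.symm
  · exact Or.inr (le_antisymm h.2 (hxn' hlt))

theorem contDiffAt_of_annulus (hR₀ : 0 < R₀) (hR : R₀ < R₁)
    {v : EuclideanSpace ℝ (Fin N) → ℝ}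
    (hv : ContDiffOn ℝ 2 v (closure (annulus N R₀ R₁)))
    {x : EuclideanSpace ℝ (Fin N)} (hx : x ∈ annulus N R₀ R₁) : ContDiffAt ℝ 2 v x := by
  apply hv.contDiffAt
  rw [mem_nhds_iff]
  exact ⟨annulus N R₀ R₁, subset_closure, annulus_isOpen, hx⟩

theorem reflMap_mem_annulus {n : EuclideanSpace ℝ (Fin N)} (hn : ‖n‖ = 1)
    {x : EuclideanSpace ℝ (Fin N)} (hx : x ∈ annulus N R₀ R₁) :
    reflMap n x ∈ annulus N R₀ R₁ := by
  have := norm_reflMap hn x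
  exact ⟨by rw [this]; exact hx.1, by rw [this]; exact hx.2⟩

theorem reflMap_mem_closure (hR₀ : 0 < R₀) (hR : R₀ < R₁)
    {n : EuclideanSpace ℝ (Fin N)} (hn : ‖n‖ = 1)
    {x : EuclideanSpace ℝ (Fin N)} (hx : x ∈ closure (annulus N R₀ R₁)) :
    reflMap n x ∈ closure (annulus N R₀ R₁) := by
  rw [mem_closure_annulus_iff hR₀ hR] at hx ⊢
  rwa [norm_reflMap hn]

/-- Main workhorse: if the right-hand side is invariant under a reflection, so is `v`. -/
theorem refl_invariance (hR₀ : 0 < R₀) (hR : R₀ < R₁)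
    {v f : EuclideanSpace ℝ (Fin N) → ℝ}
    (hv : ContDiffOn ℝ 2 v (closure (annulus N R₀ R₁)))
    (heq : ∀ x ∈ annulus N R₀ R₁, -lapl v x + v x = f x)
    (hbd : ∀ x : EuclideanSpace ℝ (Fin N), (‖x‖ = R₀ ∨ ‖x‖ = R₁) → v x = 0)
    {n : EuclideanSpace ℝ (Fin N)} (hn : ‖n‖ = 1)
    (hf : ∀ x ∈ annulus N R₀ R₁, f (reflMap n x) = f x) :
    ∀ x ∈ closure (annulus N R₀ R₁), v (reflMap n x) = v x := by
  have hvc : ContinuousOn v (closure (annulus N R₀ R₁)) := hv.continuousOn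
  have hvcS : ContinuousOn (fun x => v (reflMap n x)) (closure (annulus N R₀ R₁)) :=
    ContinuousOn.comp hvc (reflMap n).continuous.continuousOn
      (fun x hx => reflMap_mem_closure hR₀ hR hn hx)
  have hc2 : ∀ x ∈ annulus N R₀ R₁, ContDiffAt ℝ 2 (fun y => v (reflMap n y)) x := by
    intro x hx
    exact ContDiffAt.comp x (contDiffAt_of_annulus hR₀ hR hv (reflMap_mem_annulus hn hx))
      (reflMap n).contDiff.contDiffAt
  have hbdry : ∀ x ∈ closure (annulus N R₀ R₁) \ annulus N R₀ R₁,
      v x = 0 ∧ v (reflMap n x) = 0 := by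
    intro x hx
    have hb := frontier_mem hR₀ hR hx.1 hx.2
    refine ⟨hbd x hb, hbd _ ?_⟩
    rw [norm_reflMap hn]
    exact hb
  have hdiffeq : ∀ x ∈ annulus N R₀ R₁,
      lapl (fun y => v y - v (reflMap n y)) x = lapl v x - lapl v (reflMap n x) := by
    intro x hx
    rw [lapl_sub (contDiffAt_of_annulus hR₀ hR hv hx) (hc2 x hx),
      lapl_comp_refl hn (contDiffAt_of_annulus hR₀ hR hv (reflMap_mem_annulus hn hx))]
  have hdiffeq' : ∀ x ∈ annulus N R₀ R₁,
      lapl (fun y => v (reflMap n y) - v y) x = lapl v (reflMap n x) - lapl v x := by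
    intro x hx
    rw [lapl_sub (hc2 x hx) (contDiffAt_of_annulus hR₀ hR hv hx),
      lapl_comp_refl hn (contDiffAt_of_annulus hR₀ hR hv (reflMap_mem_annulus hn hx))]
  have h1 := maxprin (N := N) annulus_isOpen annulus_isBounded
    (w := fun x => v x - v (reflMap n x)) (hvc.sub hvcS)
    (fun x hx => ((contDiffAt_of_annulus hR₀ hR hv hx).sub (hc2 x hx)))
    (fun x hx => by
      rw [hdiffeq x hx]
      have e1 := heq x hx
      have e2 := heq _ (reflMap_mem_annulus hn hx)
      have e3 := hf x hx
      show (0:ℝ) ≤ -(lapl v x - lapl v (reflMap n x)) + (v x - v (reflMap n x))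
      linarith)
    (fun x hx => by
      show (0:ℝ) ≤ v x - v (reflMap n x)
      rw [(hbdry x hx).1, (hbdry x hx).2]; norm_num)
  have h2 := maxprin (N := N) annulus_isOpen annulus_isBounded
    (w := fun x => v (reflMap n x) - v x) (hvcS.sub hvc)
    (fun x hx => ((hc2 x hx).sub (contDiffAt_of_annulus hR₀ hR hv hx)))
    (fun x hx => by
      rw [hdiffeq' x hx]
      have e1 := heq x hx
      have e2 := heq _ (reflMap_mem_annulus hn hx)
      have e3 := hf x hx
      show (0:ℝ) ≤ -(lapl v (reflMap n x) - lapl v x) + (v (reflMap n x) - v x)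
      linarith)
    (fun x hx => by
      show (0:ℝ) ≤ v (reflMap n x) - v x
      rw [(hbdry x hx).1, (hbdry x hx).2]; norm_num)
  intro x hx
  have a1 : 0 ≤ v x - v (reflMap n x) := h1 x hx
  have a2 : 0 ≤ v (reflMap n x) - v x := h2 x hx
  linarith

/-- Nonnegativity of `v` from the maximum principle. -/
theorem v_nonneg (hR₀ : 0 < R₀) (hR : R₀ < R₁)
    {v f : EuclideanSpace ℝ (Fin N) → ℝ}
    (hv : ContDiffOn ℝ 2 v (closure (annulus N R₀ R₁)))
    (heq : ∀ x ∈ annulus N R₀ R₁, -lapl v x + v x = f x)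
    (hbd : ∀ x : EuclideanSpace ℝ (Fin N), (‖x‖ = R₀ ∨ ‖x‖ = R₁) → v x = 0)
    (hf : ∀ x ∈ annulus N R₀ R₁, 0 ≤ f x) :
    ∀ x ∈ closure (annulus N R₀ R₁), 0 ≤ v x := by
  apply maxprin (N := N) annulus_isOpen annulus_isBounded hv.continuousOn
    (fun x hx => contDiffAt_of_annulus hR₀ hR hv hx)
    (fun x hx => by rw [heq x hx]; exact hf x hx)
    (fun x hx => by rw [hbd x (frontier_mem hR₀ hR hx.1 hx.2)])

end PDE

section Wedge
variable {R₀ R₁ : ℝ}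

/-- The monotonicity wedge argument. -/
theorem wedge (hN : 3 ≤ N) (hR₀ : 0 < R₀) (hR : R₀ < R₁)
    {v f : EuclideanSpace ℝ (Fin N) → ℝ}
    (hv : ContDiffOn ℝ 2 v (closure (annulus N R₀ R₁)))
    (heq : ∀ x ∈ annulus N R₀ R₁, -lapl v x + v x = f x)
    (hbd : ∀ x : EuclideanSpace ℝ (Fin N), (‖x‖ = R₀ ∨ ‖x‖ = R₁) → v x = 0)
    (hf : ∀ x y : EuclideanSpace ℝ (Fin N), x ∈ closure (annulus N R₀ R₁) →
      y ∈ closure (annulus N R₀ R₁) → ‖x‖ = ‖y‖ → |lastCoord x| ≤ |lastCoord y| → f y ≤ f x)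
    (hvsym : ∀ x y : EuclideanSpace ℝ (Fin N), x ∈ closure (annulus N R₀ R₁) →
      y ∈ closure (annulus N R₀ R₁) → ‖x‖ = ‖y‖ → |lastCoord x| = |lastCoord y| → v x = v y)
    {φ : ℝ} (hφ0 : 0 < φ) (hφ1 : φ < π/2) :
    ∀ x ∈ annulus N R₀ R₁,
      ⟪(-(Real.sin φ)) • eOne hN + (Real.cos φ) • eLast hN, x⟫ < 0 →
      0 < lastCoord x - (Real.cos φ) *
          ⟪(-(Real.sin φ)) • eOne hN + (Real.cos φ) • eLast hN, x⟫ →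
      v (reflMap ((-(Real.sin φ)) • eOne hN + (Real.cos φ) • eLast hN) x) ≤ v x := by
  have hcos : 0 < Real.cos φ := Real.cos_pos_of_mem_Ioo ⟨by linarith, hφ1⟩
  set nv : EuclideanSpace ℝ (Fin N) :=
    (-(Real.sin φ)) • eOne hN + (Real.cos φ) • eLast hN with hnv
  have hnn : ‖nv‖ = 1 := by
    rw [hnv, norm_combo hN]
    rw [show (-(Real.sin φ))^2 + (Real.cos φ)^2 = 1 by
      have := Real.sin_sq_add_cos_sq φ; nlinarith]
    simp
  have hinner_eLast_nv : ⟪eLast hN, nv⟫ = Real.cos φ := by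
    rw [hnv, inner_add_right, real_inner_smul_right, real_inner_smul_right,
      inner_eLast_eOne hN, inner_eLast_eLast hN]
    ring
  have hlcS : ∀ x : EuclideanSpace ℝ (Fin N),
      lastCoord (reflMap nv x) = lastCoord x - 2*⟪nv,x⟫*(Real.cos φ) := by
    intro x
    rw [lastCoord_eq hN, lastCoord_eq hN, reflMap_apply, inner_sub_right,
      real_inner_smul_right, hinner_eLast_nv]
  set Sw : Set (EuclideanSpace ℝ (Fin N)) :=
    annulus N R₀ R₁ ∩ {x | ⟪nv,x⟫ < 0} ∩ {x | 0 < lastCoord x - (Real.cos φ) * ⟪nv,x⟫}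
    with hSwdef
  have hcont_n : Continuous fun x : EuclideanSpace ℝ (Fin N) => ⟪nv, x⟫ :=
    continuous_const.inner continuous_id
  have hcont_m : Continuous fun x : EuclideanSpace ℝ (Fin N) =>
      lastCoord x - (Real.cos φ) * ⟪nv,x⟫ := by
    have h1 : Continuous fun x : EuclideanSpace ℝ (Fin N) => ⟪eLast hN, x⟫ :=
      continuous_const.inner continuous_id
    have h2 : Continuous (lastCoord (N := N)) := by
      have heq' : (lastCoord (N := N)) = fun x => ⟪eLast hN, x⟫ := funext (lastCoord_eq hN)
      rw [heq']; exact h1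
    exact h2.sub (continuous_const.mul hcont_n)
  have hopen : IsOpen Sw := by
    apply IsOpen.inter
    apply IsOpen.inter annulus_isOpen
    · exact isOpen_lt hcont_n continuous_const
    · exact isOpen_lt continuous_const hcont_m
  have hbnd : Bornology.IsBounded Sw :=
    annulus_isBounded.subset (fun x hx => hx.1.1)
  have hclA : ∀ x ∈ closure Sw, x ∈ closure (annulus N R₀ R₁) :=
    fun x hx => closure_mono (fun y hy => hy.1.1) hx
  have hcln : ∀ x ∈ closure Sw, ⟪nv,x⟫ ≤ 0 := by
    intro x hx
    have h1 : x ∈ closure {x : EuclideanSpace ℝ (Fin N) | ⟪nv,x⟫ < 0} :=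
      closure_mono (fun y hy => hy.1.2) hx
    exact closure_lt_subset_le hcont_n continuous_const h1
  have hclm : ∀ x ∈ closure Sw, 0 ≤ lastCoord x - (Real.cos φ) * ⟪nv,x⟫ := by
    intro x hx
    have h1 : x ∈ closure {x : EuclideanSpace ℝ (Fin N) |
        0 < lastCoord x - (Real.cos φ) * ⟪nv,x⟫} :=
      closure_mono (fun y hy => hy.2) hx
    exact closure_lt_subset_le continuous_const hcont_m h1
  -- the key pointwise inequality for the right-hand side on the wedge
  have hfkey : ∀ x ∈ Sw, f (reflMap nv x) ≤ f x := by
    intro x hx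
    obtain ⟨⟨hxA, hxn⟩, hxm⟩ := hx
    have hxcl : x ∈ closure (annulus N R₀ R₁) := subset_closure hxA
    apply hf x (reflMap nv x) hxcl (reflMap_mem_closure hR₀ hR hnn hxcl)
      (norm_reflMap hnn x).symm
    rw [hlcS x]
    set t := lastCoord x
    set c := ⟪nv,x⟫
    have hc : c < 0 := hxn
    have hm : 0 < t - (Real.cos φ) * c := hxm
    have hpos : 0 < t - 2*c*(Real.cos φ) := by
      rcases le_or_gt 0 t with h | h
      · nlinarith
      · nlinarith
    rw [abs_of_pos hpos]
    apply abs_le.mpr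
    constructor <;> nlinarith
  -- values of v agree with the reflection on the wall `m = 0`
  have hwall : ∀ x, x ∈ closure (annulus N R₀ R₁) → ⟪nv,x⟫ ≤ 0 →
      lastCoord x - (Real.cos φ) * ⟪nv,x⟫ = 0 → v (reflMap nv x) = v x := by
    intro x hxcl hxn hxm
    apply hvsym _ _ (reflMap_mem_closure hR₀ hR hnn hxcl) hxcl (norm_reflMap hnn x)
    rw [hlcS x]
    have ht : lastCoord x = (Real.cos φ) * ⟪nv,x⟫ := by linarith
    rw [ht]
    rw [show (Real.cos φ) * ⟪nv,x⟫ - 2*⟪nv,x⟫*(Real.cos φ) = -((Real.cos φ) * ⟪nv,x⟫) by ring]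
    rw [abs_neg]
  -- continuity and smoothness of the comparison function
  have hvc : ContinuousOn v (closure (annulus N R₀ R₁)) := hv.continuousOn
  have hvcS : ContinuousOn (fun x => v (reflMap nv x)) (closure (annulus N R₀ R₁)) :=
    ContinuousOn.comp hvc (reflMap nv).continuous.continuousOn
      (fun x hx => reflMap_mem_closure hR₀ hR hnn hx)
  have hclsub : closure Sw ⊆ closure (annulus N R₀ R₁) := fun x hx => hclA x hx
  have hMP := maxprin (N := N) hopen hbnd
    (w := fun x => v x - v (reflMap nv x))
    ((hvc.mono hclsub).sub (hvcS.mono hclsub))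
    (fun x hx => (contDiffAt_of_annulus hR₀ hR hv hx.1.1).sub
      (ContDiffAt.comp x (contDiffAt_of_annulus hR₀ hR hv (reflMap_mem_annulus hnn hx.1.1))
        (reflMap nv).contDiff.contDiffAt))
    (fun x hx => by
      have hxA := hx.1.1
      have hcS : ContDiffAt ℝ 2 (fun y => v (reflMap nv y)) x :=
        ContDiffAt.comp x (contDiffAt_of_annulus hR₀ hR hv (reflMap_mem_annulus hnn hxA))
          (reflMap nv).contDiff.contDiffAt
      rw [lapl_sub (contDiffAt_of_annulus hR₀ hR hv hxA) hcS,
        lapl_comp_refl hnn (contDiffAt_of_annulus hR₀ hR hv (reflMap_mem_annulus hnn hxA))]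
      have e1 := heq x hxA
      have e2 := heq _ (reflMap_mem_annulus hnn hxA)
      have e3 := hfkey x hx
      show (0:ℝ) ≤ -(lapl v x - lapl v (reflMap nv x)) + (v x - v (reflMap nv x))
      linarith)
    (fun x hx => by
      show (0:ℝ) ≤ v x - v (reflMap nv x)
      obtain ⟨hxc, hxnot⟩ := hx
      have hxcl := hclA x hxc
      have hxn := hcln x hxc
      have hxm := hclm x hxc
      by_cases hxA : x ∈ annulus N R₀ R₁
      · by_cases hxn' : ⟪nv,x⟫ < 0
        · have hxm' : lastCoord x - (Real.cos φ) * ⟪nv,x⟫ = 0 := by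
            by_contra hne
            exact hxnot ⟨⟨hxA, hxn'⟩, lt_of_le_of_ne hxm (Ne.symm hne)⟩
          rw [hwall x hxcl hxn hxm']
          norm_num
        · have hzero : ⟪nv,x⟫ = 0 := le_antisymm hxn (not_lt.mp hxn')
          rw [reflMap_apply, hzero]
          simp
      · have hb := frontier_mem hR₀ hR hxcl hxA
        rw [hbd x hb, hbd _ (by rw [norm_reflMap hnn]; exact hb)]
        norm_num)
  intro x hxA hxn hxm
  have hxSw : x ∈ Sw := ⟨⟨hxA, hxn⟩, by
    show 0 < lastCoord x - (Real.cos φ) * ⟪nv,x⟫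
    exact hxm⟩
  have := hMP x (subset_closure hxSw)
  have h0 : (0:ℝ) ≤ v x - v (reflMap nv x) := this
  linarith

end Wedge

end
end Aux

/-- the cone `K` is invariant under the operator `T`. -/
theorem statement4 (N : ℕ) (hN : 3 ≤ N) (R₀ R₁ : ℝ) (hR₀ : 0 < R₀) (hR : R₀ < R₁)
    (p : ℝ) (hp : 2 < p) (a : EuclideanSpace ℝ (Fin N) → ℝ)
    (ha : memKhat N R₀ R₁ a) (hapos : ∀ x ∈ closure (annulus N R₀ R₁), 0 < a x)
    (u v : EuclideanSpace ℝ (Fin N) → ℝ) (hu : memK N R₀ R₁ u)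
    (hv : ContDiffOn ℝ 2 v (closure (annulus N R₀ R₁)))
    (heq : ∀ x ∈ annulus N R₀ R₁, -lapl v x + v x = a x * u x ^ (p - 1))
    (hbd : ∀ x : EuclideanSpace ℝ (Fin N), (‖x‖ = R₀ ∨ ‖x‖ = R₁) → v x = 0) :
    memK N R₀ R₁ v := by
  obtain ⟨ha1, ha2, 𝔞, ha_rep, ha_even, ha_anti⟩ := ha
  obtain ⟨⟨hu1, hu2, 𝔲, hu_rep, hu_even, hu_anti⟩, hu0⟩ := hu
  set f : EuclideanSpace ℝ (Fin N) → ℝ := fun x => a x * u x ^ (p-1) with hfdef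
  have heq' : ∀ x ∈ annulus N R₀ R₁, -lapl v x + v x = f x := by
    intro x hx
    rw [heq x hx]
  -- monotone transfer for the right-hand side
  have hf_mono : ∀ x y : EuclideanSpace ℝ (Fin N), x ∈ closure (annulus N R₀ R₁) →
      y ∈ closure (annulus N R₀ R₁) → ‖x‖ = ‖y‖ →
      |lastCoord x| ≤ |lastCoord y| → f y ≤ f x := by
    intro x y hx hy hn hlc
    have hau := Aux.rep_le hN hR₀ hR ha_rep ha_even ha_anti hx hy hn hlc
    have huu := Aux.rep_le hN hR₀ hR hu_rep hu_even hu_anti hx hy hn hlc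
    exact mul_le_mul hau (Real.rpow_le_rpow (hu2 y hy) huu (by linarith))
      (Real.rpow_nonneg (hu2 y hy) _) (hapos x hx).le
  have hf_eqsym : ∀ x y : EuclideanSpace ℝ (Fin N), x ∈ closure (annulus N R₀ R₁) →
      y ∈ closure (annulus N R₀ R₁) → ‖x‖ = ‖y‖ →
      |lastCoord x| = |lastCoord y| → f x = f y :=
    fun x y hx hy hn hlc =>
      le_antisymm (hf_mono y x hy hx hn.symm hlc.symm.le) (hf_mono x y hx hy hn hlc.le)
  -- nonnegativity of v
  have hvnn : ∀ x ∈ closure (annulus N R₀ R₁), 0 ≤ v x :=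
    Aux.v_nonneg hR₀ hR hv heq' hbd (fun x hx =>
      mul_nonneg (hapos x (subset_closure hx)).le
        (Real.rpow_nonneg (hu2 x (subset_closure hx)) _))
  -- the symmetric representative of v
  set 𝔳 : ℝ → ℝ → ℝ := fun r θ => v (Aux.pt hN r θ) with h𝔳
  -- axial symmetry of v
  have hv_rep : ∀ x ∈ closure (annulus N R₀ R₁), v x = 𝔳 ‖x‖ (angleOf x) := by
    intro x hx
    have hxb := (Aux.mem_closure_annulus_iff hR₀ hR).mp hx
    have hr0 : (0:ℝ) < ‖x‖ := lt_of_lt_of_le hR₀ hxb.1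
    set P : EuclideanSpace ℝ (Fin N) := Aux.pt hN ‖x‖ (angleOf x) with hP
    have hPnorm : ‖P‖ = ‖x‖ := Aux.norm_pt hN hr0.le _
    have habs : |lastCoord x| ≤ ‖x‖ := Aux.abs_lastCoord_le hN x
    have hb1 : -1 ≤ lastCoord x / ‖x‖ := by
      rw [le_div_iff₀ hr0]
      nlinarith [(abs_le.mp habs).1]
    have hb2 : lastCoord x / ‖x‖ ≤ 1 := by
      rw [div_le_one hr0]
      exact (abs_le.mp habs).2
    have hPlast : lastCoord P = lastCoord x := by
      rw [hP, Aux.lastCoord_pt hN, angleOf, Real.sin_arcsin hb1 hb2]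
      field_simp
    by_cases hxP : x = P
    · show v x = v P
      rw [hxP]
    · set d : EuclideanSpace ℝ (Fin N) := x - P with hd
      have hdne : d ≠ 0 := sub_ne_zero.mpr hxP
      have hdn : ‖d‖ ≠ 0 := norm_ne_zero_iff.mpr hdne
      set n : EuclideanSpace ℝ (Fin N) := ‖d‖⁻¹ • d with hn
      have hnn : ‖n‖ = 1 := by
        rw [hn, norm_smul, norm_inv, norm_norm, inv_mul_cancel₀ hdn]
      have hdlast : ⟪Aux.eLast hN, d⟫ = 0 := by
        have h1 := Aux.lastCoord_eq hN x
        have h2 := Aux.lastCoord_eq hN P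
        rw [hd, inner_sub_right]
        rw [← h1, ← h2, hPlast]
        ring
      have hnlast : ⟪Aux.eLast hN, n⟫ = 0 := by
        rw [hn, real_inner_smul_right, hdlast, mul_zero]
      have hlc_inv : ∀ y : EuclideanSpace ℝ (Fin N),
          lastCoord (Aux.reflMap n y) = lastCoord y := by
        intro y
        rw [Aux.lastCoord_eq hN, Aux.lastCoord_eq hN, Aux.reflMap_apply,
          inner_sub_right, real_inner_smul_right, hnlast]
        ring
      have hfinv : ∀ y ∈ annulus N R₀ R₁, f (Aux.reflMap n y) = f y := by
        intro y hy
        exact hf_eqsym _ _ (Aux.reflMap_mem_closure hR₀ hR hnn (subset_closure hy))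
          (subset_closure hy) (Aux.norm_reflMap hnn y) (by rw [hlc_inv y])
      have hrefl := Aux.refl_invariance hR₀ hR hv heq' hbd hnn hfinv x hx
      have hSxP : Aux.reflMap n x = P := by
        have hdx : ⟪d, x⟫ = ‖d‖^2/2 := by
          have h1 : ⟪d, x⟫ - ⟪d, P⟫ = ‖d‖^2 := by
            rw [← inner_sub_right, ← hd, real_inner_self_eq_norm_sq]
          have h2 : ⟪d, x⟫ + ⟪d, P⟫ = 0 := by
            rw [hd, inner_sub_left, inner_sub_left]
            have hc := real_inner_comm x P
            have hx2 : ⟪x, x⟫ = ‖x‖^2 := real_inner_self_eq_norm_sq x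
            have hP2 : ⟪P, P⟫ = ‖x‖^2 := by
              rw [real_inner_self_eq_norm_sq, hPnorm]
            linarith
          linarith
        rw [Aux.reflMap_apply, hn, real_inner_smul_left, hdx, smul_smul]
        rw [show 2 * (‖d‖⁻¹ * (‖d‖^2/2)) * ‖d‖⁻¹ = ‖d‖^2 * (‖d‖⁻¹ * ‖d‖⁻¹) by ring]
        rw [show ‖d‖^2 * (‖d‖⁻¹ * ‖d‖⁻¹) = 1 by field_simp]
        rw [one_smul, hd, sub_sub_cancel]
      show v x = v P
      rw [← hSxP]
      exact hrefl.symm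
  -- evenness of v
  have hv_eLast : ∀ x ∈ closure (annulus N R₀ R₁),
      v (Aux.reflMap (Aux.eLast hN) x) = v x := by
    apply Aux.refl_invariance hR₀ hR hv heq' hbd (Aux.norm_eLast hN)
    intro y hy
    have hlc : lastCoord (Aux.reflMap (Aux.eLast hN) y) = -(lastCoord y) := by
      rw [Aux.lastCoord_eq hN, Aux.lastCoord_eq hN, Aux.reflMap_apply,
        inner_sub_right, real_inner_smul_right, Aux.inner_eLast_eLast hN]
      ring
    exact hf_eqsym _ _ (Aux.reflMap_mem_closure hR₀ hR (Aux.norm_eLast hN) (subset_closure hy))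
      (subset_closure hy) (Aux.norm_reflMap (Aux.norm_eLast hN) y) (by rw [hlc, abs_neg])
  have hpt_mem : ∀ r ∈ Icc R₀ R₁, ∀ θ : ℝ, Aux.pt hN r θ ∈ closure (annulus N R₀ R₁) := by
    intro r hr θ
    rw [Aux.mem_closure_annulus_iff hR₀ hR, Aux.norm_pt hN (le_trans hR₀.le hr.1)]
    exact ⟨hr.1, hr.2⟩
  have hrefl_pt : ∀ r θ : ℝ, 0 ≤ r →
      Aux.reflMap (Aux.eLast hN) (Aux.pt hN r θ) = Aux.pt hN r (-θ) := by
    intro r θ hr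
    rw [Aux.reflMap_apply]
    have hip : ⟪Aux.eLast hN, Aux.pt hN r θ⟫ = r * Real.sin θ := by
      rw [← Aux.lastCoord_eq hN, Aux.lastCoord_pt hN]
    rw [hip, Aux.pt, Aux.pt, Real.cos_neg, Real.sin_neg]
    module
  have hv_even : ∀ r ∈ Icc R₀ R₁, ∀ θ ∈ Icc (-(π / 2)) (π / 2), 𝔳 r (-θ) = 𝔳 r θ := by
    intro r hr θ _
    have h1 := hv_eLast _ (hpt_mem r hr θ)
    rw [hrefl_pt r θ (le_trans hR₀.le hr.1)] at h1
    exact h1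
  -- v depends only on the norm and |lastCoord|
  have hvsym : ∀ x y : EuclideanSpace ℝ (Fin N), x ∈ closure (annulus N R₀ R₁) →
      y ∈ closure (annulus N R₀ R₁) → ‖x‖ = ‖y‖ →
      |lastCoord x| = |lastCoord y| → v x = v y := by
    intro x y hx hy hnorm hlc
    have hxb := (Aux.mem_closure_annulus_iff hR₀ hR).mp hx
    have hr0 : (0:ℝ) < ‖x‖ := lt_of_lt_of_le hR₀ hxb.1
    rw [hv_rep x hx, hv_rep y hy, ← hnorm]
    rcases abs_eq_abs.mp hlc with h | h
    · rw [angleOf, angleOf, h, hnorm]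
    · have hax : angleOf x = -(angleOf y) := by
        rw [angleOf, angleOf, h, ← hnorm, neg_div, Real.arcsin_neg]
      rw [hax]
      exact hv_even ‖x‖ ⟨hxb.1, hxb.2⟩ (angleOf y)
        ⟨Real.neg_pi_div_two_le_arcsin _, Real.arcsin_le_pi_div_two _⟩
  -- monotonicity in θ
  have hv_anti : ∀ r ∈ Icc R₀ R₁, AntitoneOn (𝔳 r) (Icc 0 (π / 2)) := by
    intro r hr θ₁ h1m θ₂ h2m h12
    rcases eq_or_lt_of_le h12 with heq12 | h12
    · rw [heq12]
    have hrpos : (0:ℝ) < r := lt_of_lt_of_le hR₀ hr.1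
    rcases eq_or_lt_of_le hr.1 with hrl | hrl
    · have hz : ∀ θ : ℝ, 𝔳 r θ = 0 := fun θ =>
        hbd _ (Or.inl (by rw [Aux.norm_pt hN hrpos.le]; exact hrl.symm))
      rw [hz θ₂, hz θ₁]
    rcases eq_or_lt_of_le hr.2 with hrr | hrr
    · have hz : ∀ θ : ℝ, 𝔳 r θ = 0 := fun θ =>
        hbd _ (Or.inr (by rw [Aux.norm_pt hN hrpos.le]; exact hrr))
      rw [hz θ₂, hz θ₁]
    set φ : ℝ := (θ₁ + θ₂)/2 with hφdef
    have hφ0 : 0 < φ := by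
      have := h1m.1
      rw [hφdef]; linarith
    have hφ1 : φ < π/2 := by
      have := h2m.2
      rw [hφdef]; linarith
    have hsinφ : 0 < Real.sin φ := Real.sin_pos_of_pos_of_lt_pi hφ0
      (by linarith [Real.pi_pos])
    have hδ0 : 0 < φ - θ₁ := by rw [hφdef]; linarith
    have hδ1 : φ - θ₁ < π/2 := by
      have := h1m.1
      rw [hφdef]; linarith
    have hsinδ : 0 < Real.sin (φ - θ₁) := Real.sin_pos_of_pos_of_lt_pi hδ0
      (by linarith [Real.pi_pos])
    have hcosδ : 0 < Real.cos (θ₁ - φ) := by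
      apply Real.cos_pos_of_mem_Ioo
      constructor <;> [linarith; linarith]
    set nv : EuclideanSpace ℝ (Fin N) :=
      (-(Real.sin φ)) • Aux.eOne hN + (Real.cos φ) • Aux.eLast hN with hnv
    have hip : ⟪nv, Aux.pt hN r θ₁⟫ = r * Real.sin (θ₁ - φ) := by
      rw [hnv, Aux.pt]
      simp only [inner_add_left, inner_add_right, real_inner_smul_left, real_inner_smul_right,
        Aux.inner_eOne_eOne hN, Aux.inner_eOne_eLast hN, Aux.inner_eLast_eOne hN,
        Aux.inner_eLast_eLast hN]
      rw [Real.sin_sub]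
      ring
    have hP1A : Aux.pt hN r θ₁ ∈ annulus N R₀ R₁ := by
      constructor
      · rw [Aux.norm_pt hN hrpos.le]; exact hrl
      · rw [Aux.norm_pt hN hrpos.le]; exact hrr
    have hsin_neg : Real.sin (θ₁ - φ) < 0 := by
      rw [show θ₁ - φ = -(φ - θ₁) by ring, Real.sin_neg]
      linarith
    have hP1n : ⟪nv, Aux.pt hN r θ₁⟫ < 0 := by
      rw [hip]
      exact mul_neg_of_pos_of_neg hrpos hsin_neg
    have hP1m : 0 < lastCoord (Aux.pt hN r θ₁) - (Real.cos φ) * ⟪nv, Aux.pt hN r θ₁⟫ := by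
      rw [hip, Aux.lastCoord_pt hN]
      have hid : Real.sin θ₁ - Real.cos φ * Real.sin (θ₁ - φ)
          = Real.sin φ * Real.cos (θ₁ - φ) := by
        rw [Real.sin_sub, Real.cos_sub]
        have hs := Real.sin_sq_add_cos_sq φ
        linear_combination (-Real.sin θ₁) * hs
      rw [show r * Real.sin θ₁ - Real.cos φ * (r * Real.sin (θ₁ - φ))
        = r * (Real.sin θ₁ - Real.cos φ * Real.sin (θ₁ - φ)) by ring, hid]
      positivity
    have hw := Aux.wedge hN hR₀ hR hv heq' hbd hf_mono hvsym hφ0 hφ1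
      (Aux.pt hN r θ₁) hP1A hP1n hP1m
    have hSP : Aux.reflMap nv (Aux.pt hN r θ₁) = Aux.pt hN r θ₂ := by
      rw [Aux.reflMap_apply, hip]
      have hθ₂ : θ₂ = 2*φ - θ₁ := by rw [hφdef]; ring
      have hA : Real.cos θ₂ = Real.cos θ₁ + 2*Real.sin (θ₁-φ)*Real.sin φ := by
        have e1 : Real.cos (2*φ-θ₁) = Real.cos φ * Real.cos (θ₁-φ)
            + Real.sin φ * Real.sin (θ₁-φ) := by
          rw [show 2*φ-θ₁ = φ - (θ₁-φ) by ring, Real.cos_sub]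
        have e2 : Real.cos ((θ₁-φ) + φ) = Real.cos (θ₁-φ) * Real.cos φ
            - Real.sin (θ₁-φ) * Real.sin φ := Real.cos_add _ _
        rw [show (θ₁-φ) + φ = θ₁ by ring] at e2
        rw [hθ₂, e1, e2]
        ring
      have hB : Real.sin θ₂ = Real.sin θ₁ - 2*Real.sin (θ₁-φ)*Real.cos φ := by
        have e1 : Real.sin (2*φ-θ₁) = Real.sin φ * Real.cos (θ₁-φ)
            - Real.cos φ * Real.sin (θ₁-φ) := by
          rw [show 2*φ-θ₁ = φ - (θ₁-φ) by ring, Real.sin_sub]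
        have e2 : Real.sin ((θ₁-φ) + φ) = Real.sin (θ₁-φ) * Real.cos φ
            + Real.cos (θ₁-φ) * Real.sin φ := Real.sin_add _ _
        rw [show (θ₁-φ) + φ = θ₁ by ring] at e2
        rw [hθ₂, e1, e2]
        ring
      rw [Aux.pt, Aux.pt, hnv, hA, hB]
      module
    rw [hSP] at hw
    exact hw
  exact ⟨⟨hv.of_le (by norm_num), hvnn, 𝔳, hv_rep, hv_even, hv_anti⟩, hbd⟩
end

section
/- Let D = {x' ∈ ℝ^{N−1} : R₀ < |x'| < R₁}, identified with A ∩ {x_N = 0} and equipped with (N−1)-dimensional Lebesgue measure. Then for every u ∈ K and every q ≥ 1 one has ∫_A |u|^q dx ≤ π R₁ ∫_D |u(x',0)|^q dx'. -/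
open MeasureTheory Real Set

lemma gamma_step' {x : ℝ} (hx : 1 ≤ x) : Real.Gamma x ≤ Real.sqrt π * Real.Gamma (x + 1/2) := by
  have h1 : (0:ℝ) < x - 1/2 := by linarith
  have h2 : (0:ℝ) < x + 1/2 := by linarith
  have hx0 : (0:ℝ) < x := by linarith
  have hG1 := Real.Gamma_pos_of_pos h1
  have hG2 := Real.Gamma_pos_of_pos h2
  have hGx := Real.Gamma_pos_of_pos hx0
  have hconv := Real.convexOn_log_Gamma.2 (Set.mem_Ioi.mpr h1) (Set.mem_Ioi.mpr h2)
    (by norm_num : (0:ℝ) ≤ 1/2) (by norm_num : (0:ℝ) ≤ 1/2) (by norm_num)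
  simp only [Function.comp_apply, smul_eq_mul] at hconv
  rw [show (1/2:ℝ) * (x - 1/2) + 1/2 * (x + 1/2) = x by ring] at hconv
  have hsq : Real.Gamma x ^ 2 ≤ Real.Gamma (x - 1/2) * Real.Gamma (x + 1/2) := by
    have := Real.exp_le_exp.mpr hconv
    rw [Real.exp_log hGx] at this
    calc Real.Gamma x ^ 2 = Real.Gamma x * Real.Gamma x := sq (Real.Gamma x) ▸ by ring
      _ ≤ Real.exp (1/2 * Real.log (Real.Gamma (x-1/2)) + 1/2 * Real.log (Real.Gamma (x+1/2)))
          * Real.exp (1/2 * Real.log (Real.Gamma (x-1/2)) + 1/2 * Real.log (Real.Gamma (x+1/2))) :=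
        mul_le_mul this this hGx.le (Real.exp_pos _).le
      _ = Real.exp (Real.log (Real.Gamma (x-1/2)) + Real.log (Real.Gamma (x+1/2))) := by
        rw [← Real.exp_add]; ring_nf
      _ = Real.Gamma (x - 1/2) * Real.Gamma (x + 1/2) := by
        rw [Real.exp_add, Real.exp_log hG1, Real.exp_log hG2]
  have hrec : Real.Gamma (x + 1/2) = (x - 1/2) * Real.Gamma (x - 1/2) := by
    have := Real.Gamma_add_one (s := x - 1/2) h1.ne'
    rw [show x - 1/2 + 1 = x + 1/2 by ring] at this
    exact this
  have hπ : (1:ℝ) / (x - 1/2) ≤ π := by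
    rw [div_le_iff₀ h1]
    nlinarith [Real.pi_gt_three]
  have h3 : Real.Gamma (x - 1/2) = Real.Gamma (x + 1/2) / (x - 1/2) := by
    rw [hrec, mul_comm, mul_div_assoc, div_self h1.ne', mul_one]
  have hπ' : (1:ℝ) ≤ π * (x - 1/2) := by
    rw [div_le_iff₀ h1] at hπ; linarith
  have e1 : Real.Gamma (x - 1/2) * Real.Gamma (x + 1/2)
      = Real.Gamma (x + 1/2) ^ 2 / (x - 1/2) := by rw [h3]; ring
  have e2 : Real.Gamma (x + 1/2) ^ 2 / (x - 1/2) ≤ π * Real.Gamma (x + 1/2) ^ 2 := by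
    rw [div_le_iff₀ h1]
    nlinarith [sq_nonneg (Real.Gamma (x + 1/2))]
  have key : Real.Gamma x ^ 2 ≤ π * Real.Gamma (x + 1/2) ^ 2 :=
    hsq.trans (e1 ▸ e2)
  have hs : Real.sqrt π * Real.Gamma (x + 1/2) = Real.sqrt (π * Real.Gamma (x + 1/2)^2) := by
    rw [Real.sqrt_mul Real.pi_pos.le, Real.sqrt_sq hG2.le]
  rw [hs]
  calc Real.Gamma x = Real.sqrt (Real.Gamma x ^ 2) := (Real.sqrt_sq hGx.le).symm
    _ ≤ Real.sqrt (π * Real.Gamma (x + 1/2)^2) := Real.sqrt_le_sqrt key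

lemma const_ineq' (M : ℕ) (hM : 2 ≤ M) :
    ((M:ℝ)+1) * (Real.sqrt π ^ (M+1) / Real.Gamma (((M:ℝ)+1)/2 + 1))
      ≤ π * M * (Real.sqrt π ^ M / Real.Gamma ((M:ℝ)/2 + 1)) := by
  have hx : (1:ℝ) ≤ (M:ℝ)/2 := by
    have : (2:ℝ) ≤ (M:ℝ) := by exact_mod_cast hM
    linarith
  have hx0 : (0:ℝ) < (M:ℝ)/2 := by linarith
  have hx12 : (0:ℝ) < (M:ℝ)/2 + 1/2 := by linarith
  have hG1 := Real.Gamma_pos_of_pos hx0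
  have hG2 := Real.Gamma_pos_of_pos hx12
  have key2 : Real.sqrt π * Real.Gamma ((M:ℝ)/2)
      ≤ π * Real.Gamma ((M:ℝ)/2 + 1/2) := by
    calc Real.sqrt π * Real.Gamma ((M:ℝ)/2)
        ≤ Real.sqrt π * (Real.sqrt π * Real.Gamma ((M:ℝ)/2 + 1/2)) :=
          mul_le_mul_of_nonneg_left (gamma_step' hx) (Real.sqrt_nonneg _)
      _ = (Real.sqrt π * Real.sqrt π) * Real.Gamma ((M:ℝ)/2 + 1/2) := by ring
      _ = π * Real.Gamma ((M:ℝ)/2 + 1/2) := by rw [Real.mul_self_sqrt Real.pi_pos.le]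
  have hrw1 : Real.Gamma ((M:ℝ)/2 + 1) = ((M:ℝ)/2) * Real.Gamma ((M:ℝ)/2) :=
    Real.Gamma_add_one hx0.ne'
  have hrw2 : Real.Gamma (((M:ℝ)+1)/2 + 1)
      = ((M:ℝ)/2 + 1/2) * Real.Gamma ((M:ℝ)/2 + 1/2) := by
    rw [show ((M:ℝ)+1)/2 + 1 = ((M:ℝ)/2 + 1/2) + 1 by ring]
    exact Real.Gamma_add_one hx12.ne'
  rw [hrw1, hrw2, pow_succ, ← mul_div_assoc, ← mul_div_assoc,
    div_le_div_iff₀ (by positivity) (by positivity)]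
  nlinarith [mul_le_mul_of_nonneg_left key2
    (show (0:ℝ) ≤ 2 * ((M:ℝ)/2 + 1/2) * ((M:ℝ)/2) * Real.sqrt π ^ M by positivity)]

lemma ball_vol (n : ℕ) (hn : 0 < n) :
    (volume (Metric.ball (0 : EuclideanSpace ℝ (Fin n)) 1)).toReal
      = Real.sqrt π ^ n / Real.Gamma ((n:ℝ)/2 + 1) := by
  haveI : Nonempty (Fin n) := ⟨⟨0, hn⟩⟩
  rw [EuclideanSpace.volume_ball, Fintype.card_fin, ENNReal.ofReal_one, one_pow, one_mul,
    ENNReal.toReal_ofReal]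
  exact div_nonneg (pow_nonneg (Real.sqrt_nonneg _) _)
    (Real.Gamma_pos_of_pos (by positivity)).le

lemma radial_int (n : ℕ) (hn : 0 < n) (f : ℝ → ℝ) :
    (∫ x : EuclideanSpace ℝ (Fin n), f ‖x‖)
      = (n:ℝ) * (Real.sqrt π ^ n / Real.Gamma ((n:ℝ)/2 + 1))
        * ∫ y in Set.Ioi (0:ℝ), y ^ (n - 1) * f y := by
  haveI : Nonempty (Fin n) := ⟨⟨0, hn⟩⟩
  have := MeasureTheory.integral_fun_norm_addHaar
    (volume : Measure (EuclideanSpace ℝ (Fin n))) f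
  simp only [finrank_euclideanSpace, Fintype.card_fin, nsmul_eq_mul, smul_eq_mul] at this
  rw [this, measureReal_def, ball_vol n hn, mul_assoc]


lemma lastCoord_single (M : ℕ) (hM : 2 ≤ M) (r : ℝ) :
    lastCoord (EuclideanSpace.single (0 : Fin (M+1)) r) = 0 := by
  rw [lastCoord, dif_pos (by omega : 0 < M + 1)]
  rw [EuclideanSpace.single_apply, if_neg]
  intro h
  have : M + 1 - 1 = (0 : ℕ) := by exact_mod_cast congrArg (Fin.val) h
  omega

lemma angleOf_single (M : ℕ) (hM : 2 ≤ M) (r : ℝ) :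
    angleOf (EuclideanSpace.single (0 : Fin (M+1)) r) = 0 := by
  rw [angleOf, lastCoord_single M hM, zero_div, Real.arcsin_zero]

lemma norm_single' (M : ℕ) (r : ℝ) (hr : 0 ≤ r) :
    ‖EuclideanSpace.single (0 : Fin (M+1)) r‖ = r := by
  rw [EuclideanSpace.norm_single, Real.norm_eq_abs, abs_of_nonneg hr]

lemma embedHyper_apply (M : ℕ) (x' : EuclideanSpace ℝ (Fin (M + 1 - 1))) (j : Fin (M+1)) :
    embedHyper (M+1) x' j = if h : (j : ℕ) < M then x' ⟨j, by omega⟩ else 0 := by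
  rw [embedHyper, WithLp.equiv_symm_apply, PiLp.toLp_apply]
  simp only [Nat.add_sub_cancel]

lemma norm_embedHyper (M : ℕ) (x' : EuclideanSpace ℝ (Fin (M + 1 - 1))) :
    ‖embedHyper (M+1) x'‖ = ‖x'‖ := by
  rw [EuclideanSpace.norm_eq, EuclideanSpace.norm_eq]
  congr 1
  rw [Fin.sum_univ_castSucc]
  have hlast : embedHyper (M+1) x' (Fin.last M) = 0 := by
    rw [embedHyper_apply, dif_neg (by simp)]
  rw [hlast]
  simp only [norm_zero, ne_eq, OfNat.ofNat_ne_zero, not_false_eq_true, zero_pow, add_zero]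
  apply Finset.sum_congr rfl
  intro i _
  rw [embedHyper_apply, dif_pos (by simp)]
  congr 1

lemma lastCoord_embedHyper (M : ℕ) (x' : EuclideanSpace ℝ (Fin (M + 1 - 1))) :
    lastCoord (embedHyper (M+1) x') = 0 := by
  rw [lastCoord, dif_pos (by omega : 0 < M + 1)]
  rw [show (⟨M + 1 - 1, by omega⟩ : Fin (M+1)) = Fin.last M by rfl]
  rw [embedHyper_apply, dif_neg (by simp)]

lemma angleOf_embedHyper (M : ℕ) (x' : EuclideanSpace ℝ (Fin (M + 1 - 1))) :
    angleOf (embedHyper (M+1) x') = 0 := by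
  rw [angleOf, lastCoord_embedHyper, zero_div, Real.arcsin_zero]

lemma integrableOn_of_bdd {α : Type*} [MeasurableSpace α] [TopologicalSpace α]
    [OpensMeasurableSpace α] {μ : MeasureTheory.Measure α} {s : Set α} {f : α → ℝ}
    (hs : MeasurableSet s) (hμ : μ s ≠ ⊤) (hf : ContinuousOn f s) {C : ℝ}
    (hC : ∀ x ∈ s, ‖f x‖ ≤ C) : MeasureTheory.IntegrableOn f s μ :=
  ⟨hf.aestronglyMeasurable hs,
    MeasureTheory.HasFiniteIntegral.restrict_of_bounded C hμ.lt_top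
      ((MeasureTheory.ae_restrict_iff' hs).mpr (MeasureTheory.ae_of_all _ hC))⟩

/-- for `u ∈ K`, the `L^q(A)`-norm is controlled by the trace on `D`. -/
theorem statement7 (N : ℕ) (hN : 3 ≤ N) (R₀ R₁ : ℝ) (hR₀ : 0 < R₀) (hR : R₀ < R₁)
    (u : EuclideanSpace ℝ (Fin N) → ℝ) (hu : memK N R₀ R₁ u) (q : ℝ) (hq : 1 ≤ q) :
    (∫ x in annulus N R₀ R₁, |u x| ^ q)
      ≤ π * R₁ * ∫ x' in annulus (N - 1) R₀ R₁, |u (embedHyper N x')| ^ q := by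
  obtain ⟨M, rfl⟩ : ∃ M, N = M + 1 := ⟨N - 1, by omega⟩
  have hM : 2 ≤ M := by omega
  have hq0 : (0:ℝ) ≤ q := by linarith
  obtain ⟨⟨hC1, hpos, 𝔲, hrep, hsym, hmono⟩, _hbd⟩ := hu
  set A := annulus (M+1) R₀ R₁ with hAdef
  -- openness / measurability / finiteness of A
  have hAopen : IsOpen A := by
    have : A = norm ⁻¹' (Set.Ioo R₀ R₁) := rfl
    rw [this]; exact IsOpen.preimage continuous_norm isOpen_Ioo
  have hAmeas : MeasurableSet A := hAopen.measurableSet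
  have hAsub : A ⊆ Metric.ball (0 : EuclideanSpace ℝ (Fin (M+1))) R₁ := by
    intro x hx; rw [mem_ball_zero_iff]; exact hx.2
  have hAfin : volume A ≠ ⊤ :=
    ((measure_mono hAsub).trans_lt measure_ball_lt_top).ne
  -- compactness of the closure
  have hAcomp : IsCompact (closure A) := by
    apply Metric.isCompact_of_isClosed_isBounded isClosed_closure
    exact (Metric.isBounded_ball.subset hAsub).closure
  -- continuity of |u|^q on the closure
  have hvcont : ContinuousOn (fun x => |u x| ^ q) (closure A) :=
    (hC1.continuousOn.abs).rpow_const (fun x _ => Or.inr hq0)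
  obtain ⟨C, hC⟩ := hAcomp.exists_bound_of_continuousOn hvcont
  -- the single map
  have hsingle_cont : Continuous (fun r : ℝ => EuclideanSpace.single (0 : Fin (M+1)) r) := by
    have : (fun r : ℝ => EuclideanSpace.single (0 : Fin (M+1)) r)
        = fun r : ℝ => r • EuclideanSpace.single (0 : Fin (M+1)) (1:ℝ) := by
      funext r
      ext j
      simp [EuclideanSpace.single_apply, PiLp.smul_apply, mul_ite]
    rw [this]
    exact continuous_id.smul continuous_const
  have hsingle_mem : ∀ r ∈ Set.Ioo R₀ R₁,
      EuclideanSpace.single (0 : Fin (M+1)) r ∈ A := by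
    intro r hr
    constructor <;> rw [norm_single' M r (by linarith [hr.1])]
    exacts [hr.1, hr.2]
  -- the radial profile
  set G : ℝ → ℝ := fun r => |u (EuclideanSpace.single (0 : Fin (M+1)) r)| ^ q with hGdef
  have hGnonneg : ∀ r, 0 ≤ G r := fun r => Real.rpow_nonneg (abs_nonneg _) q
  have hGval : ∀ r ∈ Set.Ioo R₀ R₁, G r = |𝔲 r 0| ^ q := by
    intro r hr
    have hy := hsingle_mem r hr
    have := hrep _ (subset_closure hy)
    rw [hGdef]
    simp only
    rw [this, angleOf_single M hM, norm_single' M r (by linarith [hr.1])]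
  have hGbound : ∀ r ∈ Set.Ioo R₀ R₁, ‖G r‖ ≤ C := by
    intro r hr
    have := hC _ (subset_closure (hsingle_mem r hr))
    simpa [hGdef, Real.norm_eq_abs] using this
  have hGcont : ContinuousOn G (Set.Ioo R₀ R₁) := by
    apply hvcont.comp hsingle_cont.continuousOn
    intro r hr
    exact subset_closure (hsingle_mem r hr)
  -- pointwise bound on A
  have hptwise : ∀ x ∈ A, |u x| ^ q ≤ G ‖x‖ := by
    intro x hx
    have hxcl : x ∈ closure A := subset_closure hx
    have hrIoo : ‖x‖ ∈ Set.Ioo R₀ R₁ := ⟨hx.1, hx.2⟩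
    have hrIcc : ‖x‖ ∈ Set.Icc R₀ R₁ := ⟨hx.1.le, hx.2.le⟩
    have hθmem : angleOf x ∈ Set.Icc (-(π/2)) (π/2) :=
      ⟨Real.neg_pi_div_two_le_arcsin _, Real.arcsin_le_pi_div_two _⟩
    have hux : u x = 𝔲 ‖x‖ (angleOf x) := hrep x hxcl
    have hx0 : 0 ≤ u x := hpos x hxcl
    have h0mem : (0:ℝ) ∈ Set.Icc 0 (π/2) := ⟨le_refl 0, (by positivity : (0:ℝ) < π/2).le⟩
    have hle : 𝔲 ‖x‖ (angleOf x) ≤ 𝔲 ‖x‖ 0 := by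
      rcases le_or_gt 0 (angleOf x) with h | h
      · exact hmono ‖x‖ hrIcc h0mem ⟨h, hθmem.2⟩ h
      · rw [← hsym ‖x‖ hrIcc (angleOf x) hθmem]
        exact hmono ‖x‖ hrIcc h0mem ⟨by linarith, by linarith [hθmem.1]⟩ (by linarith)
    rw [hGval ‖x‖ hrIoo]
    apply Real.rpow_le_rpow (abs_nonneg _) _ hq0
    rw [abs_of_nonneg hx0, hux]
    exact hle.trans (le_abs_self _)
  -- trace identity on D
  have htrace : ∀ x' ∈ annulus (M + 1 - 1) R₀ R₁, |u (embedHyper (M+1) x')| ^ q = G ‖x'‖ := by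
    intro x' hx'
    have hnrm := norm_embedHyper M x'
    have hmem : embedHyper (M+1) x' ∈ A := by
      constructor <;> rw [hnrm]
      exacts [hx'.1, hx'.2]
    have := hrep _ (subset_closure hmem)
    rw [this, angleOf_embedHyper M x', hnrm, hGval ‖x'‖ ⟨hx'.1, hx'.2⟩]
  -- integrability on A
  have hIA1 : IntegrableOn (fun x => |u x| ^ q) A volume := by
    refine integrableOn_of_bdd hAmeas hAfin (hvcont.mono subset_closure) (C := C) ?_
    intro x hx; exact hC x (subset_closure hx)
  have hIA2 : IntegrableOn (fun x => G ‖x‖) A volume := by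
    refine integrableOn_of_bdd hAmeas hAfin ?_ (C := C) ?_
    · apply hGcont.comp continuous_norm.continuousOn
      intro x hx; exact ⟨hx.1, hx.2⟩
    · intro x hx; exact hGbound ‖x‖ ⟨hx.1, hx.2⟩
  -- step 1 : compare with the radialized integrand
  have step1 : (∫ x in A, |u x| ^ q) ≤ ∫ x in A, G ‖x‖ :=
    setIntegral_mono_on hIA1 hIA2 hAmeas hptwise
  -- indicator function on ℝ
  set f : ℝ → ℝ := (Set.Ioo R₀ R₁).indicator G with hfdef
  have hIoosub : Set.Ioo R₀ R₁ ⊆ Set.Ioi (0:ℝ) := fun y hy => lt_trans hR₀ hy.1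
  -- generic reduction to the 1-dim integral, for any dimension n and exponent k
  have hred : ∀ n : ℕ, 0 < n →
      (∫ x in annulus n R₀ R₁, G ‖x‖)
        = (n:ℝ) * (Real.sqrt π ^ n / Real.Gamma ((n:ℝ)/2 + 1))
          * ∫ y in Set.Ioo R₀ R₁, y ^ (n - 1) * G y := by
    intro n hn
    have hmeas : MeasurableSet (annulus n R₀ R₁) := by
      have : annulus n R₀ R₁ = norm ⁻¹' (Set.Ioo R₀ R₁) := rfl
      rw [this]; exact (IsOpen.preimage continuous_norm isOpen_Ioo).measurableSet
    have e1 : (∫ x : EuclideanSpace ℝ (Fin n), f ‖x‖)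
        = ∫ x in annulus n R₀ R₁, G ‖x‖ := by
      have hfun : (fun x : EuclideanSpace ℝ (Fin n) => f ‖x‖)
          = (annulus n R₀ R₁).indicator (fun x => G ‖x‖) := by
        funext x
        by_cases hx : x ∈ annulus n R₀ R₁
        · rw [Set.indicator_of_mem hx, hfdef, Set.indicator_of_mem (Set.mem_Ioo.mpr ⟨hx.1, hx.2⟩)]
        · rw [hfdef, Set.indicator_of_notMem hx, Set.indicator_of_notMem]
          intro hmem
          exact hx (Set.mem_setOf.mpr ⟨(Set.mem_Ioo.mp hmem).1, (Set.mem_Ioo.mp hmem).2⟩)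
      rw [hfun, integral_indicator hmeas]
    have e2 : (∫ y in Set.Ioi (0:ℝ), y ^ (n-1) * f y)
        = ∫ y in Set.Ioo R₀ R₁, y ^ (n-1) * G y := by
      have : (fun y => y ^ (n-1) * f y)
          = (Set.Ioo R₀ R₁).indicator (fun y => y ^ (n-1) * G y) := by
        funext y
        by_cases hy : y ∈ Set.Ioo R₀ R₁
        · rw [hfdef, Set.indicator_of_mem hy, Set.indicator_of_mem hy]
        · rw [hfdef, Set.indicator_of_notMem hy, Set.indicator_of_notMem hy, mul_zero]
      rw [this, setIntegral_indicator measurableSet_Ioo,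
        Set.inter_eq_self_of_subset_right hIoosub]
    rw [← e1, radial_int n hn f, e2]
  -- 1-dim integrability
  have hI1D : ∀ k : ℕ, IntegrableOn (fun y => y ^ k * G y) (Set.Ioo R₀ R₁) volume := by
    intro k
    refine integrableOn_of_bdd measurableSet_Ioo (by simp) ?_ (C := R₁ ^ k * C) ?_
    · exact (continuous_pow k).continuousOn.mul hGcont
    · intro y hy
      have h1 : |y ^ k| ≤ R₁ ^ k := by
        rw [abs_of_nonneg (pow_nonneg (by linarith [hy.1]) k)]
        exact pow_le_pow_left₀ (by linarith [hy.1]) hy.2.le k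
      have h2 : |G y| ≤ C := by rw [← Real.norm_eq_abs]; exact hGbound y hy
      have h3 : (0:ℝ) ≤ C := le_trans (abs_nonneg _) h2
      calc ‖y ^ k * G y‖ = |y ^ k| * |G y| := abs_mul _ _
        _ ≤ R₁ ^ k * C := mul_le_mul h1 h2 (abs_nonneg _) (pow_nonneg (by linarith) k)
  -- the 1-dim comparison
  have h1D : (∫ y in Set.Ioo R₀ R₁, y ^ M * G y)
      ≤ R₁ * ∫ y in Set.Ioo R₀ R₁, y ^ (M-1) * G y := by
    rw [← integral_const_mul]
    apply setIntegral_mono_on (hI1D M) ((hI1D (M-1)).const_mul R₁) measurableSet_Ioo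
    intro y hy
    have hy0 : (0:ℝ) < y := lt_trans hR₀ hy.1
    have hpow : y ^ M = y ^ (M-1) * y := by
      rw [← pow_succ]
      congr 1
      omega
    rw [hpow]
    have h1 : y ^ (M-1) * y * G y ≤ y ^ (M-1) * R₁ * G y := by
      apply mul_le_mul_of_nonneg_right _ (hGnonneg y)
      exact mul_le_mul_of_nonneg_left hy.2.le (pow_nonneg hy0.le _)
    calc y ^ (M-1) * y * G y ≤ y ^ (M-1) * R₁ * G y := h1
      _ = R₁ * (y ^ (M-1) * G y) := by ring
  -- nonnegativity of the 1-dim integral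
  have hJnonneg : (0:ℝ) ≤ ∫ y in Set.Ioo R₀ R₁, y ^ (M-1) * G y := by
    apply setIntegral_nonneg measurableSet_Ioo
    intro y hy
    exact mul_nonneg (pow_nonneg (by linarith [hy.1]) _) (hGnonneg y)
  -- assemble
  have hRHSeq : (∫ x' in annulus (M + 1 - 1) R₀ R₁, |u (embedHyper (M+1) x')| ^ q)
      = (M:ℝ) * (Real.sqrt π ^ M / Real.Gamma ((M:ℝ)/2 + 1))
        * ∫ y in Set.Ioo R₀ R₁, y ^ (M-1) * G y := by
    have hmeasD : MeasurableSet (annulus (M + 1 - 1) R₀ R₁) := by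
      have : annulus (M + 1 - 1) R₀ R₁ = norm ⁻¹' (Set.Ioo R₀ R₁) := rfl
      rw [this]; exact (IsOpen.preimage continuous_norm isOpen_Ioo).measurableSet
    rw [setIntegral_congr_fun hmeasD htrace]
    have := hred (M + 1 - 1) (by omega)
    simpa only [Nat.add_sub_cancel] using this
  have hLHSle : (∫ x in A, |u x| ^ q)
      ≤ ((M:ℝ)+1) * (Real.sqrt π ^ (M+1) / Real.Gamma (((M:ℝ)+1)/2 + 1))
        * (R₁ * ∫ y in Set.Ioo R₀ R₁, y ^ (M-1) * G y) := by
    refine step1.trans ?_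
    rw [hred (M+1) (by omega)]
    simp only [Nat.add_sub_cancel, Nat.cast_add, Nat.cast_one]
    apply mul_le_mul_of_nonneg_left h1D
    have hg := (Real.Gamma_pos_of_pos (show (0:ℝ) < ((M:ℝ)+1)/2 + 1 by positivity))
    positivity
  rw [hRHSeq]
  refine hLHSle.trans ?_
  have hconst := const_ineq' M hM
  set c₁ := ((M:ℝ)+1) * (Real.sqrt π ^ (M+1) / Real.Gamma (((M:ℝ)+1)/2 + 1)) with hc1
  set c₂ := π * (M:ℝ) * (Real.sqrt π ^ M / Real.Gamma ((M:ℝ)/2 + 1)) with hc2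
  set J := ∫ y in Set.Ioo R₀ R₁, y ^ (M-1) * G y with hJ
  have : c₁ * (R₁ * J) ≤ c₂ * (R₁ * J) := by
    apply mul_le_mul_of_nonneg_right hconst
    exact mul_nonneg (by linarith) hJnonneg
  calc c₁ * (R₁ * J) ≤ c₂ * (R₁ * J) := this
    _ = π * R₁ * ((M:ℝ) * (Real.sqrt π ^ M / Real.Gamma ((M:ℝ)/2 + 1)) * J) := by
      rw [hc2]; ring
end
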